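/- arXiv:2407.03088 — 7 statements merged into one kernel-verified Lean document; each statement's English description precedes it below -/
import Mathlib

section
/- Let P be an n×n correlation with strictly positive entries and let 0 ≤ λ < 1. Then there exist a dimension d and a state σ generating P with local dimension d under depolarizing noise of strength λ if and only if there exist vectors s, t ∈ ℝ_{>0}^n with ‖s‖₁ = ‖t‖₁ = 1 such that P̂_λ^{s,t}(x,y) ≥ 0 for all x, y ∈ {1,…,n}. -/
open Matrix BigOperators Finset
open scoped Kronecker ComplexOrder

noncomputable section

/-- The effect of the depolarizing channel on a measurement effect (Heisenberg picture). -/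
def noisyEffect {d : ℕ} (lam : ℝ) (E : Matrix (Fin d) (Fin d) ℂ) : Matrix (Fin d) (Fin d) ℂ :=
  ((1 - lam : ℝ) : ℂ) • E + ((lam : ℂ) * E.trace / (d : ℂ)) • (1 : Matrix (Fin d) (Fin d) ℂ)

/-- A POVM on ℂ^d with n outcomes. -/
def IsPOVM {d n : ℕ} (E : Fin n → Matrix (Fin d) (Fin d) ℂ) : Prop :=
  (∀ x, (E x).PosSemidef) ∧ ∑ x, E x = 1

/-- P is generated with local dimension d under depolarizing noise of strength lam. -/
def GeneratesWithNoise {n : ℕ} (P : Matrix (Fin n) (Fin n) ℝ) (lam : ℝ) (d : ℕ) : Prop :=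
  ∃ (σ : Matrix (Fin d × Fin d) (Fin d × Fin d) ℂ)
    (E F : Fin n → Matrix (Fin d) (Fin d) ℂ),
    σ.PosSemidef ∧ σ.trace = 1 ∧ IsPOVM E ∧ IsPOVM F ∧
    ∀ x y, (P x y : ℂ) =
      ((noisyEffect lam (E x) ⊗ₖ noisyEffect lam (F y)) * σ).trace

/-- The matrix P̂_λ^{s,t}. -/
def Phat {n : ℕ} (P : Matrix (Fin n) (Fin n) ℝ) (lam : ℝ) (s t : Fin n → ℝ)
    (x y : Fin n) : ℝ :=
  P x y - lam * s x * (∑ a, P a y) - lam * t y * (∑ b, P x b) + lam ^ 2 * s x * t y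

/-- Nonnegative rank. -/
def NonnegRank {m n : ℕ} (P : Matrix (Fin m) (Fin n) ℝ) : ℕ :=
  sInf {r : ℕ | ∃ (u : Fin r → Fin m → ℝ) (v : Fin r → Fin n → ℝ),
    (∀ i x, 0 ≤ u i x) ∧ (∀ i y, 0 ≤ v i y) ∧ ∀ x y, P x y = ∑ i, u i x * v i y}

/-- PSD rank. -/
def PsdRank {m n : ℕ} (M : Matrix (Fin m) (Fin n) ℝ) : ℕ :=
  sInf {r : ℕ | ∃ (C : Fin m → Matrix (Fin r) (Fin r) ℂ)
    (D : Fin n → Matrix (Fin r) (Fin r) ℂ),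
    (∀ x, (C x).PosSemidef) ∧ (∀ y, (D y).PosSemidef) ∧
    ∀ x y, (M x y : ℂ) = (C x * D y).trace}

def outerProj {α : Type*} [Fintype α] (ψ : α → ℂ) : Matrix α α ℂ :=
  Matrix.of fun i j => ψ i * (starRingEnd ℂ) (ψ j)

def qval (k : ℝ) : ℝ := 1 / (1 - k) - Real.sqrt (1 / (1 - k) ^ 2 - 1)

def Bmat (m : ℕ) (k : ℝ) : Matrix (Fin m) (Fin m) ℝ :=
  Matrix.of fun x y =>
    (1 / (m : ℝ) ^ 2) * (1 - k * Real.cos (2 * Real.pi * ((x.val : ℝ) + (y.val : ℝ)) / m))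

def Amat (m : ℕ) (k : ℝ) : Matrix (Fin (m + 1)) (Fin (m + 1)) ℝ :=
  Matrix.of fun x y =>
    if x.val = 0 then
      (if y.val = 0 then (1 - qval k) ^ 2 / 2 else qval k * (1 - qval k) / (2 * m))
    else if y.val = 0 then qval k * (1 - qval k) / (2 * m)
    else ((1 + (qval k) ^ 2) / 2) *
      ((1 / (m : ℝ) ^ 2) *
        (1 - k * Real.cos (2 * Real.pi * (((x.val : ℝ) - 1) + ((y.val : ℝ) - 1)) / m)))

def IsElPsdFactorization {n : ℕ} (P : Matrix (Fin n) (Fin n) ℝ) (lam : ℝ) (r : ℕ)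
    (C D : Fin n → Matrix (Fin r) (Fin r) ℂ) : Prop :=
  (∀ x, (C x).PosSemidef) ∧ (∀ y, (D y).PosSemidef) ∧
  (∀ x y, (P x y : ℂ) = (C x * D y).trace) ∧
  IsUnit (∑ k, C k) ∧ IsUnit (∑ k, D k) ∧
  (∀ x, (C x - (((lam : ℂ) / r) * (C x * (∑ k, C k)⁻¹).trace) • (∑ k, C k)).PosSemidef) ∧
  (∀ y, (D y - (((lam : ℂ) / r) * (D y * (∑ k, D k)⁻¹).trace) • (∑ k, D k)).PosSemidef)

/-!
If `σ, E, F` generate `P`, put `s x = tr (E x) / d` and `t y = tr (F y) / d`. The noisy effect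
of `E x` is then `(1 - λ) E x + λ s x • 1`, and since the noisy effects of a POVM still sum to
the identity, subtracting `λ s x • 1` and `λ t y • 1` inside the bilinear form
`(A, B) ↦ tr ((A ⊗ B) σ)` turns `P` into `P̂`; hence `P̂ x y = (1 - λ)² tr ((E x ⊗ F y) σ) ≥ 0`.

Conversely, `Q = P̂ / (1 - λ)²` is a probability distribution from which `P` is recovered by
mixing in the noise: `P x y = ∑ ((1 - λ) δ x x' + λ s x) ((1 - λ) δ y y' + λ t y) Q x' y'`.
This is realised on `ℂ^(n + m)` by the classical state `Q` on the first `n` basis vectors and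
diagonal effects that answer `x` deterministically there and put the weight still needed for
`tr (E x) = (n + m) s x` on the last `m` vectors; for `m` large that weight is nonnegative.
-/

namespace Matrix

variable {ι : Type*} [Fintype ι] {A B : Matrix ι ι ℂ}

lemma PosSemidef.trace_mul_nonneg [DecidableEq ι] (hA : A.PosSemidef) (hB : B.PosSemidef) :
    0 ≤ (A * B).trace := by
  open scoped MatrixOrder in
  obtain ⟨b, rfl⟩ := CStarAlgebra.nonneg_iff_eq_star_mul_self.mp hB.nonneg
  rw [star_eq_conjTranspose, ← Matrix.mul_assoc, trace_mul_cycle]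
  exact (hA.mul_mul_conjTranspose_same b).trace_nonneg

lemma PosSemidef.ofReal_re_trace (hA : A.PosSemidef) : (A.trace.re : ℂ) = A.trace :=
  (Complex.eq_re_of_ofReal_le (r := 0) (by exact_mod_cast hA.trace_nonneg)).symm

lemma PosSemidef.re_trace_pos (hA : A.PosSemidef) (hA0 : A ≠ 0) : 0 < A.trace.re := by
  refine (Complex.nonneg_iff.mp hA.trace_nonneg).1.lt_of_ne fun h => hA0 ?_
  rw [← hA.trace_eq_zero_iff, ← hA.ofReal_re_trace, ← h, Complex.ofReal_zero]

end Matrix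

def kroneckerTraceForm {ι κ : Type*} [Fintype ι] [Fintype κ]
    (σ : Matrix (ι × κ) (ι × κ) ℂ) : Matrix ι ι ℂ →ₗ[ℂ] Matrix κ κ ℂ →ₗ[ℂ] ℂ :=
  (kroneckerBilinear (R := ℂ) (α := ℂ)).compr₂
    (traceLinearMap (ι × κ) ℂ ℂ ∘ₗ LinearMap.mulRight ℂ σ)

@[simp]
lemma kroneckerTraceForm_apply {ι κ : Type*} [Fintype ι] [Fintype κ]
    (σ : Matrix (ι × κ) (ι × κ) ℂ) (A : Matrix ι ι ℂ) (B : Matrix κ κ ℂ) :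
    kroneckerTraceForm σ A B = ((A ⊗ₖ B) * σ).trace :=
  rfl

lemma Phat_eq_bilinear_sub_smul {n : ℕ} {M N : Type*} [AddCommGroup M] [Module ℂ M]
    [AddCommGroup N] [Module ℂ N] (ω : M →ₗ[ℂ] N →ₗ[ℂ] ℂ) {P : Matrix (Fin n) (Fin n) ℝ}
    {u : Fin n → M} {v : Fin n → N} {e : M} {f : N}
    (hP : ∀ x y, (P x y : ℂ) = ω (u x) (v y)) (hu : ∑ x, u x = e) (hv : ∑ y, v y = f)
    (hω : ω e f = 1) (lam : ℝ) (s t : Fin n → ℝ) (x y : Fin n) :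
    (Phat P lam s t x y : ℂ) =
      ω (u x - ((lam * s x : ℝ) : ℂ) • e) (v y - ((lam * t y : ℝ) : ℂ) • f) := by
  have hrow : ∑ b, (P x b : ℂ) = ω (u x) f := by simp only [hP, ← hv, map_sum]
  have hcol : ∑ a, (P a y : ℂ) = ω e (v y) := by
    simp only [hP, ← hu, map_sum, LinearMap.sum_apply]
  simp only [Phat, map_sub, map_smul, LinearMap.sub_apply, LinearMap.smul_apply, hω,
    smul_eq_mul]
  push_cast
  rw [hrow, hcol, hP]
  ring

lemma noisyEffect_zero {d : ℕ} (lam : ℝ) : noisyEffect lam (0 : Matrix (Fin d) (Fin d) ℂ) = 0 := by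
  simp [noisyEffect]

lemma noisyEffect_sub_smul_one {d : ℕ} (lam : ℝ) (E : Matrix (Fin d) (Fin d) ℂ) :
    noisyEffect lam E - ((lam : ℂ) * (E.trace / d)) • 1 = ((1 - lam : ℝ) : ℂ) • E := by
  rw [noisyEffect, mul_div_assoc, add_sub_cancel_right]

lemma noisyEffect_apply_self {d : ℕ} (lam : ℝ) (E : Matrix (Fin d) (Fin d) ℂ) (i : Fin d) :
    noisyEffect lam E i i = (1 - lam) * E i i + lam * (E.trace / d) := by
  simp [noisyEffect, mul_div_assoc]

namespace IsPOVM

variable {d n : ℕ} {E : Fin n → Matrix (Fin d) (Fin d) ℂ}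

lemma sum_trace (hE : IsPOVM E) : ∑ x, (E x).trace = d := by
  simp [← trace_sum, hE.2]

lemma sum_noisyEffect (hd : d ≠ 0) (hE : IsPOVM E) (lam : ℝ) :
    ∑ x, noisyEffect lam (E x) = 1 := by
  have hd' : (d : ℂ) ≠ 0 := Nat.cast_ne_zero.mpr hd
  simp only [noisyEffect, Finset.sum_add_distrib, ← Finset.smul_sum, ← Finset.sum_smul,
    ← Finset.sum_div, ← Finset.mul_sum, hE.2, hE.sum_trace, mul_div_cancel_right₀ _ hd',
    ← add_smul]
  push_cast
  simp

lemma exists_weights (hd : d ≠ 0) (hE : IsPOVM E) (hE0 : ∀ x, E x ≠ 0) :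
    ∃ s : Fin n → ℝ, (∀ x, 0 < s x) ∧ ∑ x, s x = 1 ∧ ∀ x, (s x : ℂ) = (E x).trace / d := by
  have hd' : (0 : ℝ) < d := Nat.cast_pos.mpr (Nat.pos_of_ne_zero hd)
  refine ⟨fun x => (E x).trace.re / d, fun x => div_pos ((hE.1 x).re_trace_pos (hE0 x)) hd',
    ?_, fun x => by push_cast; rw [(hE.1 x).ofReal_re_trace]⟩
  rw [← Finset.sum_div, ← Complex.re_sum, hE.sum_trace, Complex.natCast_re, div_self hd'.ne']

end IsPOVM

section Phat

variable {n : ℕ} {P : Matrix (Fin n) (Fin n) ℝ} {lam : ℝ} {s t : Fin n → ℝ}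

lemma sum_Phat_right (hsum : ∑ x, ∑ y, P x y = 1) (ht : ∑ y, t y = 1) (x : Fin n) :
    ∑ y, Phat P lam s t x y = (1 - lam) * (∑ y, P x y - lam * s x) := by
  simp only [Phat, Finset.sum_add_distrib, Finset.sum_sub_distrib, ← Finset.mul_sum,
    ← Finset.sum_mul, Finset.sum_comm.trans hsum, ht]
  ring

lemma sum_Phat_left (hsum : ∑ x, ∑ y, P x y = 1) (hs : ∑ x, s x = 1) (y : Fin n) :
    ∑ x, Phat P lam s t x y = (1 - lam) * (∑ x, P x y - lam * t y) := by
  simp only [Phat, Finset.sum_add_distrib, Finset.sum_sub_distrib, ← Finset.mul_sum,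
    ← Finset.sum_mul, hsum, hs]
  ring

lemma sum_sum_Phat (hsum : ∑ x, ∑ y, P x y = 1) (hs : ∑ x, s x = 1) (ht : ∑ y, t y = 1) :
    ∑ x, ∑ y, Phat P lam s t x y = (1 - lam) ^ 2 := by
  simp only [sum_Phat_right hsum ht, ← Finset.mul_sum, Finset.sum_sub_distrib, hsum, hs]
  ring

lemma sum_noise_mul_Phat (hsum : ∑ x, ∑ y, P x y = 1) (hs : ∑ x, s x = 1)
    (ht : ∑ y, t y = 1) (x y : Fin n) :
    ∑ x', ∑ y', ((1 - lam) * (if x = x' then 1 else 0) + lam * s x) *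
      ((1 - lam) * (if y = y' then 1 else 0) + lam * t y) * Phat P lam s t x' y' =
      (1 - lam) ^ 2 * P x y := by
  have expand : ∀ x' y', ((1 - lam) * (if x = x' then 1 else 0) + lam * s x) *
      ((1 - lam) * (if y = y' then 1 else 0) + lam * t y) * Phat P lam s t x' y' =
      (1 - lam) ^ 2 * ((if x = x' then 1 else 0) * ((if y = y' then 1 else 0) *
        Phat P lam s t x' y')) +
      (1 - lam) * lam * t y * ((if x = x' then 1 else 0) * Phat P lam s t x' y') +
      (1 - lam) * lam * s x * ((if y = y' then 1 else 0) * Phat P lam s t x' y') +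
      lam ^ 2 * s x * t y * Phat P lam s t x' y' := fun x' y' => by ring
  simp only [expand, Finset.sum_add_distrib, ← Finset.mul_sum, Finset.sum_boole_mul,
    Finset.mem_univ, if_true]
  rw [sum_Phat_right hsum ht, sum_Phat_left hsum hs, sum_sum_Phat hsum hs ht]
  simp only [Phat]
  ring

end Phat

section ClassicalState

variable {κ α : Type*} [Fintype κ] [DecidableEq α]

def classicalState (ι : κ → α) (Q : κ → κ → ℝ) : Matrix (α × α) (α × α) ℂ :=
  ∑ x, ∑ y, single (ι x, ι y) (ι x, ι y) (Q x y : ℂ)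

variable (ι : κ → α) {Q : κ → κ → ℝ}

lemma posSemidef_classicalState (hQ : ∀ x y, 0 ≤ Q x y) : (classicalState ι Q).PosSemidef :=
  posSemidef_sum _ fun x _ => posSemidef_sum _ fun y _ => by
    rw [← diagonal_single]
    exact PosSemidef.diagonal (Pi.single_nonneg.mpr (Complex.zero_le_real.mpr (hQ x y)))

lemma trace_classicalState [Fintype α] : (classicalState ι Q).trace = ∑ x, ∑ y, (Q x y : ℂ) := by
  simp [classicalState, trace_sum]

lemma trace_kronecker_mul_classicalState [Fintype α] (A B : Matrix α α ℂ) :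
    ((A ⊗ₖ B) * classicalState ι Q).trace =
      ∑ x, ∑ y, A (ι x) (ι x) * B (ι y) (ι y) * Q x y := by
  simp [classicalState, Finset.mul_sum, trace_sum, trace_mul_single, mul_assoc]

end ClassicalState

section PaddedEffect

variable {n : ℕ} (m : ℕ) (s : Fin n → ℝ)

def paddedWeights (x : Fin n) : Fin (n + m) → ℝ :=
  Fin.append (Pi.single x 1) fun _ => ((n + m) * s x - 1) / m

def paddedEffect (x : Fin n) : Matrix (Fin (n + m)) (Fin (n + m)) ℂ :=
  diagonal fun i => (paddedWeights m s x i : ℂ)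

lemma paddedEffect_castAdd (x x' : Fin n) :
    paddedEffect m s x (Fin.castAdd m x') (Fin.castAdd m x') =
      ((if x = x' then 1 else 0 : ℝ) : ℂ) := by
  simp [paddedEffect, paddedWeights, Pi.single_apply, eq_comm]

variable {m s}

lemma sum_paddedWeights (hm : m ≠ 0) (x : Fin n) :
    ∑ i, paddedWeights m s x i = (n + m) * s x := by
  have hm' : (m : ℝ) ≠ 0 := Nat.cast_ne_zero.mpr hm
  simp only [paddedWeights, Fin.sum_univ_add, Fin.append_left, Finset.sum_pi_single',
    Finset.mem_univ, if_true, Fin.append_right, Finset.sum_const, Finset.card_univ,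
    Fintype.card_fin, nsmul_eq_mul]
  field_simp
  ring

lemma sum_paddedWeights_apply (hm : m ≠ 0) (hs : ∑ x, s x = 1) (i : Fin (n + m)) :
    ∑ x, paddedWeights m s x i = 1 := by
  refine Fin.addCases (fun x' => ?_) (fun j => ?_) i
  · simp [paddedWeights, Pi.single_apply]
  · simp [paddedWeights, ← Finset.sum_div, Finset.sum_sub_distrib, ← Finset.mul_sum, hs, hm]

lemma paddedWeights_nonneg (hge : ∀ x, 1 ≤ (n + m) * s x) (x : Fin n) (i : Fin (n + m)) :
    0 ≤ paddedWeights m s x i := by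
  refine Fin.addCases (fun x' => ?_) (fun j => ?_) i
  · simp only [paddedWeights, Fin.append_left, Pi.single_apply]
    split_ifs <;> norm_num
  · simpa [paddedWeights] using div_nonneg (sub_nonneg.mpr (hge x)) (Nat.cast_nonneg m)

lemma isPOVM_paddedEffect (hm : m ≠ 0) (hs : ∑ x, s x = 1) (hge : ∀ x, 1 ≤ (n + m) * s x) :
    IsPOVM (paddedEffect m s) := by
  refine ⟨fun x => PosSemidef.diagonal fun i =>
    Complex.zero_le_real.mpr (paddedWeights_nonneg hge x i), ?_⟩
  ext i j
  rw [Matrix.sum_apply]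
  by_cases hij : i = j
  · subst hij
    simp [paddedEffect, ← Complex.ofReal_sum, sum_paddedWeights_apply hm hs]
  · simp [paddedEffect, hij]

lemma trace_paddedEffect (hm : m ≠ 0) (x : Fin n) :
    (paddedEffect m s x).trace = (n + m : ℕ) * (s x : ℂ) := by
  rw [paddedEffect, trace_diagonal, ← Complex.ofReal_sum, sum_paddedWeights hm]
  push_cast
  ring

lemma noisyEffect_paddedEffect_castAdd (hm : m ≠ 0) (lam : ℝ) (x x' : Fin n) :
    noisyEffect lam (paddedEffect m s x) (Fin.castAdd m x') (Fin.castAdd m x') =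
      (((1 - lam) * (if x = x' then 1 else 0) + lam * s x : ℝ) : ℂ) := by
  have hnm : ((n + m : ℕ) : ℂ) ≠ 0 := Nat.cast_ne_zero.mpr (by omega)
  rw [noisyEffect_apply_self, paddedEffect_castAdd, trace_paddedEffect hm,
    mul_div_cancel_left₀ _ hnm]
  push_cast
  ring

end PaddedEffect

lemma eventually_forall_one_le_add_mul {n : ℕ} {s : Fin n → ℝ} (hs : ∀ x, 0 < s x) :
    ∀ᶠ m : ℕ in Filter.atTop, ∀ x, 1 ≤ (n + m) * s x := by
  refine Filter.eventually_all.mpr fun x => ?_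
  filter_upwards [tendsto_natCast_atTop_atTop.eventually_ge_atTop (1 / s x)] with m hm
  rw [div_le_iff₀ (hs x)] at hm
  nlinarith [hs x, (Nat.cast_nonneg n : (0 : ℝ) ≤ n)]

theorem GeneratesWithNoise.exists_Phat_nonneg {n d : ℕ} {P : Matrix (Fin n) (Fin n) ℝ}
    {lam : ℝ} (hpos : ∀ x y, 0 < P x y) (h : GeneratesWithNoise P lam d) :
    ∃ s t : Fin n → ℝ, (∀ x, 0 < s x) ∧ (∀ y, 0 < t y) ∧
      (∑ x, s x) = 1 ∧ (∑ y, t y) = 1 ∧ ∀ x y, 0 ≤ Phat P lam s t x y := by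
  obtain ⟨σ, E, F, hσ, hσtr, hE, hF, hP⟩ := h
  have hd : d ≠ 0 := by
    rintro rfl
    simp at hσtr
  have hE0 : ∀ x, E x ≠ 0 := fun x hx => (hpos x x).ne' <| by
    simpa [hx, noisyEffect_zero] using hP x x
  have hF0 : ∀ y, F y ≠ 0 := fun y hy => (hpos y y).ne' <| by
    simpa [hy, noisyEffect_zero] using hP y y
  obtain ⟨s, hs0, hs1, hsE⟩ := hE.exists_weights hd hE0
  obtain ⟨t, ht0, ht1, htF⟩ := hF.exists_weights hd hF0
  refine ⟨s, t, hs0, ht0, hs1, ht1, fun x y => ?_⟩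
  have hPhat := Phat_eq_bilinear_sub_smul (kroneckerTraceForm σ) hP (hE.sum_noisyEffect hd lam)
    (hF.sum_noisyEffect hd lam) (by simpa using hσtr) lam s t x y
  push_cast at hPhat
  rw [hsE, htF, noisyEffect_sub_smul_one, noisyEffect_sub_smul_one] at hPhat
  simp only [map_smul, LinearMap.smul_apply, kroneckerTraceForm_apply, smul_eq_mul] at hPhat
  have hnonneg := (hE.1 x).kronecker (hF.1 y) |>.trace_mul_nonneg hσ
  have : (0 : ℂ) ≤ Phat P lam s t x y := by
    rw [hPhat, ← mul_assoc, ← Complex.ofReal_mul]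
    exact mul_nonneg (Complex.zero_le_real.mpr (mul_self_nonneg _)) hnonneg
  exact_mod_cast this

theorem exists_generatesWithNoise_of_Phat_nonneg {n : ℕ} {P : Matrix (Fin n) (Fin n) ℝ}
    {lam : ℝ} (hsum : ∑ x, ∑ y, P x y = 1) (hlam : lam ≠ 1) {s t : Fin n → ℝ}
    (hs0 : ∀ x, 0 < s x) (ht0 : ∀ y, 0 < t y) (hs1 : ∑ x, s x = 1) (ht1 : ∑ y, t y = 1)
    (hPhat : ∀ x y, 0 ≤ Phat P lam s t x y) : ∃ d, GeneratesWithNoise P lam d := by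
  obtain ⟨m, hm, hms, hmt⟩ := ((Filter.eventually_ne_atTop 0).and
    ((eventually_forall_one_le_add_mul hs0).and (eventually_forall_one_le_add_mul ht0))).exists
  have hlam' : (1 - lam) ^ 2 ≠ 0 := pow_ne_zero 2 (sub_ne_zero.mpr hlam.symm)
  let Q x y := Phat P lam s t x y / (1 - lam) ^ 2
  refine ⟨n + m, classicalState (Fin.castAdd m) Q, paddedEffect m s, paddedEffect m t,
    posSemidef_classicalState _ fun x y => div_nonneg (hPhat x y) (sq_nonneg _), ?_,
    isPOVM_paddedEffect hm hs1 hms, isPOVM_paddedEffect hm ht1 hmt, fun x y => ?_⟩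
  · have : ∑ x, ∑ y, Q x y = 1 := by
      simp only [Q, ← Finset.sum_div, sum_sum_Phat hsum hs1 ht1, div_self hlam']
    rw [trace_classicalState]
    exact_mod_cast this
  · have : P x y = ∑ x', ∑ y', ((1 - lam) * (if x = x' then 1 else 0) + lam * s x) *
        ((1 - lam) * (if y = y' then 1 else 0) + lam * t y) * Q x' y' := by
      simp only [Q, mul_div_assoc', ← Finset.sum_div, sum_noise_mul_Phat hsum hs1 ht1,
        mul_div_cancel_left₀ _ hlam']
    rw [trace_kronecker_mul_classicalState]
    simp only [noisyEffect_paddedEffect_castAdd hm]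
    exact_mod_cast this

theorem reachability_iff_Phat_nonneg_general
    {n : ℕ} (P : Matrix (Fin n) (Fin n) ℝ)
    (hpos : ∀ x y, 0 < P x y) (hsum : ∑ x, ∑ y, P x y = 1)
    (lam : ℝ) (hlam1 : lam < 1) :
    (∃ d : ℕ, GeneratesWithNoise P lam d) ↔
    (∃ s t : Fin n → ℝ, (∀ x, 0 < s x) ∧ (∀ y, 0 < t y) ∧
      (∑ x, s x) = 1 ∧ (∑ y, t y) = 1 ∧
      ∀ x y, 0 ≤ Phat P lam s t x y) :=
  ⟨fun ⟨_, h⟩ => h.exists_Phat_nonneg hpos,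
    fun ⟨_, _, hs0, ht0, hs1, ht1, hPhat⟩ =>
      exists_generatesWithNoise_of_Phat_nonneg hsum hlam1.ne hs0 ht0 hs1 ht1 hPhat⟩

/-- reachability under depolarizing noise is equivalent to the existence of
positive weight vectors s, t with ‖s‖₁ = ‖t‖₁ = 1 making P̂_λ^{s,t} entrywise nonnegative. -/
theorem reachability_iff_Phat_nonneg
    {n : ℕ} (P : Matrix (Fin n) (Fin n) ℝ)
    (hpos : ∀ x y, 0 < P x y) (hsum : ∑ x, ∑ y, P x y = 1)
    (lam : ℝ) (hlam0 : 0 ≤ lam) (hlam1 : lam < 1) :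
    (∃ d : ℕ, GeneratesWithNoise P lam d) ↔
    (∃ s t : Fin n → ℝ, (∀ x, 0 < s x) ∧ (∀ y, 0 < t y) ∧
      (∑ x, s x) = 1 ∧ (∑ y, t y) = 1 ∧
      ∀ x y, 0 ≤ Phat P lam s t x y) :=
  reachability_iff_Phat_nonneg_general P hpos hsum lam hlam1

end
end

section
/- Let P be an n×n real matrix with nonnegative entries summing to 1. If the (real) rank of P is at least 2, then there exist indices x₀, y₀ ∈ {1,…,n} such that (∑_{b=1}^n P(x₀,b))·(∑_{a=1}^n P(a,y₀)) − P(x₀,y₀) > 0. Consequently, the upper bound 1 − max_{φ ∈ S_n} ∑_x √(max{0, (∑_b P(x,b))(∑_a P(a,φ(x))) − P(x,φ(x))}) on admissible noise strengths is strictly less than 1. -/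
/-!
If no entry of `P` lay strictly below the product of its row and column marginals, then,
since `P` and the outer product of its marginals both have total mass `1`, they would agree
entrywise, and `P` would have rank at most `1`. An entry `(x₀, y₀)` with positive margin
contributes a positive term to the sum for any permutation sending `x₀` to `y₀`, such as a
transposition, so the maximum over permutations is positive.
-/

open Matrix BigOperators Finset
open scoped Kronecker ComplexOrder

noncomputable section

namespace Matrix

variable {m n R : Type*} [Fintype m] [Fintype n]

theorem exists_lt_rowSum_mul_colSum [CommRing R] [LinearOrder R] [IsOrderedCancelAddMonoid R]
    {P : Matrix m n R} (hsum : ∑ x, ∑ y, P x y = 1)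
    (hne : P ≠ vecMulVec (fun x => ∑ b, P x b) (fun y => ∑ a, P a y)) :
    ∃ x y, P x y < (∑ b, P x b) * (∑ a, P a y) := by
  by_contra! hle
  have htotal : ∑ x, ∑ y, (∑ b, P x b) * (∑ a, P a y) = ∑ x, ∑ y, P x y := by
    rw [← sum_mul_sum, hsum, sum_comm, hsum, one_mul]
  have hrow := (sum_eq_sum_iff_of_le fun x _ => sum_le_sum fun y _ => hle x y).1 htotal
  refine hne (ext fun x y => ?_)
  exact ((sum_eq_sum_iff_of_le fun y _ => hle x y).1 (hrow x (mem_univ x)) y (mem_univ y)).symm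

end Matrix

namespace Equiv.Perm

theorem sup'_sum_sqrt_max_pos {α : Type*} [Fintype α] [DecidableEq α]
    (H : (univ : Finset (Perm α)).Nonempty) {g : α → α → ℝ} {x₀ y₀ : α} (hpos : 0 < g x₀ y₀) :
    0 < univ.sup' H (fun φ : Perm α => ∑ x, Real.sqrt (max 0 (g x (φ x)))) :=
  calc 0 < Real.sqrt (max 0 (g x₀ (swap x₀ y₀ x₀))) := by
        rw [swap_apply_left]
        exact Real.sqrt_pos.2 (lt_max_of_lt_right hpos)
    _ ≤ ∑ x, Real.sqrt (max 0 (g x (swap x₀ y₀ x))) :=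
        single_le_sum (f := fun x => Real.sqrt (max 0 (g x (swap x₀ y₀ x))))
          (fun x _ => Real.sqrt_nonneg _) (mem_univ x₀)
    _ ≤ _ := le_sup' (fun φ : Perm α => ∑ x, Real.sqrt (max 0 (g x (φ x)))) (mem_univ _)

end Equiv.Perm

theorem exists_positive_margin_and_bound_lt_one_general
    {n : ℕ} (P : Matrix (Fin n) (Fin n) ℝ)
    (hsum : ∑ x, ∑ y, P x y = 1)
    (hrank : 2 ≤ P.rank) :
    (∃ x₀ y₀ : Fin n, 0 < (∑ b, P x₀ b) * (∑ a, P a y₀) - P x₀ y₀) ∧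
    1 - (Finset.univ.sup' ⟨1, Finset.mem_univ (1 : Equiv.Perm (Fin n))⟩
      (fun φ : Equiv.Perm (Fin n) =>
        ∑ x, Real.sqrt (max 0 ((∑ b, P x b) * (∑ a, P a (φ x)) - P x (φ x))))) < 1 := by
  have hne : P ≠ vecMulVec (fun x => ∑ b, P x b) (fun y => ∑ a, P a y) := fun h => by
    have hle := rank_vecMulVec_le (fun x => ∑ b, P x b) (fun y => ∑ a, P a y)
    rw [← h] at hle
    omega
  obtain ⟨x₀, y₀, hlt⟩ := exists_lt_rowSum_mul_colSum hsum hne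
  have hpos := sub_pos.2 hlt
  exact ⟨⟨x₀, y₀, hpos⟩, sub_lt_self 1 (Equiv.Perm.sup'_sum_sqrt_max_pos _
    (g := fun x y => (∑ b, P x b) * (∑ a, P a y) - P x y) hpos)⟩

/-- if a correlation has rank at least 2, then some entry is strictly
dominated by the product of its marginals, and consequently the upper bound on
admissible noise strengths is strictly less than 1. -/
theorem exists_positive_margin_and_bound_lt_one
    {n : ℕ} (P : Matrix (Fin n) (Fin n) ℝ)
    (hnn : ∀ x y, 0 ≤ P x y) (hsum : ∑ x, ∑ y, P x y = 1)
    (hrank : 2 ≤ P.rank) :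
    (∃ x₀ y₀ : Fin n, 0 < (∑ b, P x₀ b) * (∑ a, P a y₀) - P x₀ y₀) ∧
    1 - (Finset.univ.sup' ⟨1, Finset.mem_univ (1 : Equiv.Perm (Fin n))⟩
      (fun φ : Equiv.Perm (Fin n) =>
        ∑ x, Real.sqrt (max 0 ((∑ b, P x b) * (∑ a, P a (φ x)) - P x (φ x))))) < 1 :=
  exists_positive_margin_and_bound_lt_one_general P hsum hrank

end
end

section
/- Let P be an n×n correlation with strictly positive entries and let 0 ≤ λ < 1. If P admits an 𝔈_λ-PSD factorization of size r, then P can be generated with local dimension r under depolarizing noise of strength λ. In particular, the minimal local dimension C_λ(P) of a noisy quantum protocol generating P satisfies C_λ(P) ≤ rank_psd^{𝔈_λ}(P), the minimal size of an 𝔈_λ-PSD factorization of P. -/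
/-! Write `∑ C x = R²` and `∑ D y = W²` with `R`, `W` Hermitian and invertible. The whitened
matrices `R⁻¹ C x R⁻¹` sum to the identity, and the 𝔈_λ condition says exactly that undoing the
depolarizing noise, `A ↦ (1 - λ)⁻¹ (A - (λ / r) tr A · I)`, keeps them positive semidefinite;
so they are the noisy effects of a POVM, and likewise for `D`. For the pure state with
coefficient matrix `M = R W` one has `tr ((X ⊗ Y) |M⟩⟨M|) = tr (X M Yᵀ Mᴴ)`, which for the
whitened effects (the second party's transposed) collapses to `tr (C x D y) = P x y`. -/

open Matrix BigOperators Finset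
open scoped Kronecker ComplexOrder

noncomputable section

theorem posSemidef_outerProj {α : Type*} [Fintype α] (ψ : α → ℂ) : (outerProj ψ).PosSemidef :=
  posSemidef_vecMulVec_self_star ψ

section Vectorization

variable {m : Type*} [Fintype m]

theorem trace_kronecker_mul_outerProj (X Y M : Matrix m m ℂ) :
    ((X ⊗ₖ Y) * outerProj (fun p : m × m => M p.1 p.2)).trace = (X * M * Yᵀ * Mᴴ).trace := by
  simp only [Matrix.trace, Matrix.diag, Matrix.mul_apply, Matrix.kroneckerMap_apply,
    outerProj, Matrix.of_apply, Matrix.transpose_apply, Matrix.conjTranspose_apply,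
    Fintype.sum_prod_type, Finset.sum_mul, starRingEnd_apply]
  refine Finset.sum_congr rfl fun i _ => Finset.sum_congr rfl fun j _ => ?_
  conv_lhs => rw [Finset.sum_comm]
  refine Finset.sum_congr rfl fun k _ => Finset.sum_congr rfl fun l _ => ?_
  ring

theorem trace_outerProj_vec [DecidableEq m] (M : Matrix m m ℂ) :
    (outerProj (fun p : m × m => M p.1 p.2)).trace = (M * Mᴴ).trace := by
  simpa using trace_kronecker_mul_outerProj 1 1 M

end Vectorization

section Whitening

variable {m : Type*} [Fintype m] [DecidableEq m] {R W : Matrix m m ℂ}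

open scoped MatrixOrder in
theorem exists_isHermitian_mul_self_eq {S : Matrix m m ℂ} (hS : S.PosSemidef) (hSu : IsUnit S) :
    ∃ R : Matrix m m ℂ, R.IsHermitian ∧ IsUnit R.det ∧ R * R = S := by
  refine ⟨CFC.sqrt S, (CFC.sqrt_nonneg S).posSemidef.1, ?_, CFC.sqrt_mul_sqrt_self S hS.nonneg⟩
  have h := (Matrix.isUnit_iff_isUnit_det S).mp hSu
  rw [← CFC.sqrt_mul_sqrt_self S hS.nonneg, Matrix.det_mul] at h
  exact isUnit_of_mul_isUnit_left h

theorem inv_mul_mul_self_mul_inv (hR : IsUnit R.det) : R⁻¹ * (R * R) * R⁻¹ = 1 := by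
  rw [← Matrix.mul_assoc, nonsing_inv_mul _ hR, Matrix.one_mul, mul_nonsing_inv _ hR]

theorem trace_inv_mul_mul_inv (C : Matrix m m ℂ) :
    (R⁻¹ * C * R⁻¹).trace = (C * (R * R)⁻¹).trace := by
  rw [Matrix.mul_inv_rev, trace_mul_cycle, trace_mul_comm]

theorem Matrix.PosSemidef.inv_mul_mul_inv_sub_smul_one {C : Matrix m m ℂ} {c : ℂ}
    (hRH : R.IsHermitian) (hR : IsUnit R.det) (hC : (C - c • (R * R)).PosSemidef) :
    (R⁻¹ * C * R⁻¹ - c • 1).PosSemidef := by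
  have h := hC.mul_mul_conjTranspose_same R⁻¹
  rwa [hRH.inv.eq, Matrix.mul_sub, Matrix.sub_mul, Matrix.mul_smul, Matrix.smul_mul,
    inv_mul_mul_self_mul_inv hR] at h

theorem trace_inv_conj_mul_inv_conj (hRH : R.IsHermitian) (hWH : W.IsHermitian)
    (hR : IsUnit R.det) (hW : IsUnit W.det) (C D : Matrix m m ℂ) :
    ((R⁻¹ * C * R⁻¹) * (R * W) * (W⁻¹ * D * W⁻¹) * (R * W)ᴴ).trace = (C * D).trace := by
  rw [conjTranspose_mul, hWH.eq, hRH.eq]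
  simp only [Matrix.mul_assoc, nonsing_inv_mul_cancel_left _ _ hR,
    nonsing_inv_mul_cancel_left _ _ hW, mul_nonsing_inv_cancel_left _ _ hW]
  rw [trace_mul_comm, Matrix.mul_assoc, mul_nonsing_inv_cancel_right _ _ hR]

end Whitening

section Depolarizing

variable {d n : ℕ} {lam : ℝ}

def noisyEffectInv (lam : ℝ) (A : Matrix (Fin d) (Fin d) ℂ) : Matrix (Fin d) (Fin d) ℂ :=
  (((1 - lam)⁻¹ : ℝ) : ℂ) • (A - ((lam : ℂ) / d * A.trace) • 1)

theorem noisyEffect_transpose (lam : ℝ) (E : Matrix (Fin d) (Fin d) ℂ) :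
    noisyEffect lam Eᵀ = (noisyEffect lam E)ᵀ := by
  simp [noisyEffect, Matrix.transpose_add, Matrix.transpose_smul, Matrix.trace_transpose]

theorem trace_noisyEffectInv (hlam : lam ≠ 1) (A : Matrix (Fin d) (Fin d) ℂ) :
    (noisyEffectInv lam A).trace = A.trace := by
  rcases eq_or_ne d 0 with rfl | hd
  · simp
  have hlam' : (1 - lam : ℂ) ≠ 0 := by exact_mod_cast sub_ne_zero.mpr hlam.symm
  simp only [noisyEffectInv, trace_smul, trace_sub, trace_one, Fintype.card_fin, smul_eq_mul]
  push_cast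
  field_simp

theorem noisyEffect_noisyEffectInv (hlam : lam ≠ 1) (A : Matrix (Fin d) (Fin d) ℂ) :
    noisyEffect lam (noisyEffectInv lam A) = A := by
  have hlam' : (1 - lam : ℂ) ≠ 0 := by exact_mod_cast sub_ne_zero.mpr hlam.symm
  rw [noisyEffect, trace_noisyEffectInv hlam, noisyEffectInv, smul_smul]
  push_cast
  rw [mul_inv_cancel₀ hlam', one_smul, mul_div_right_comm, sub_add_cancel]

theorem IsPOVM.transpose {E : Fin n → Matrix (Fin d) (Fin d) ℂ} (hE : IsPOVM E) :
    IsPOVM fun x => (E x)ᵀ :=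
  ⟨fun x => (hE.1 x).transpose, by rw [← transpose_sum, hE.2, transpose_one]⟩

theorem isPOVM_noisyEffectInv (hlam : lam < 1) {A : Fin n → Matrix (Fin d) (Fin d) ℂ}
    (hA : ∀ x, (A x - ((lam : ℂ) / d * (A x).trace) • 1).PosSemidef) (hsum : ∑ x, A x = 1) :
    IsPOVM fun x => noisyEffectInv lam (A x) := by
  refine ⟨fun x => (hA x).smul (by exact_mod_cast (inv_pos.mpr (sub_pos.mpr hlam)).le), ?_⟩
  rcases eq_or_ne d 0 with rfl | hd
  · exact Subsingleton.elim _ _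
  have hlam' : (1 - lam : ℂ) ≠ 0 := by exact_mod_cast (sub_pos.mpr hlam).ne'
  simp only [noisyEffectInv, ← Finset.smul_sum, Finset.sum_sub_distrib, ← Finset.sum_smul,
    ← Finset.mul_sum, ← trace_sum, hsum, trace_one, Fintype.card_fin]
  push_cast
  rw [div_mul_cancel₀ _ (Nat.cast_ne_zero.mpr hd),
    show (1 : Matrix (Fin d) (Fin d) ℂ) - (lam : ℂ) • 1 = (1 - (lam : ℂ)) • 1 by
      rw [sub_smul, one_smul],
    smul_smul, inv_mul_cancel₀ hlam', one_smul]

theorem isPOVM_noisyEffectInv_whiten (hlam : lam < 1) {B : Fin n → Matrix (Fin d) (Fin d) ℂ}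
    {V : Matrix (Fin d) (Fin d) ℂ} (hVH : V.IsHermitian) (hV : IsUnit V.det)
    (hVV : V * V = ∑ k, B k)
    (hBE : ∀ x, (B x - (((lam : ℂ) / d) * (B x * (∑ k, B k)⁻¹).trace) • (∑ k, B k)).PosSemidef) :
    IsPOVM fun x => noisyEffectInv lam (V⁻¹ * B x * V⁻¹) := by
  rw [← hVV] at hBE
  refine isPOVM_noisyEffectInv hlam (fun x => ?_) ?_
  · rw [trace_inv_mul_mul_inv]
    exact (hBE x).inv_mul_mul_inv_sub_smul_one hVH hV
  · rw [← Finset.sum_mul, ← Finset.mul_sum, ← hVV, inv_mul_mul_self_mul_inv hV]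

end Depolarizing

theorem generates_of_ElPsdFactorization_general
    {n : ℕ} (P : Matrix (Fin n) (Fin n) ℝ)
    (hsum : ∑ x, ∑ y, P x y = 1)
    (lam : ℝ) (hlam1 : lam < 1)
    (r : ℕ) (C D : Fin n → Matrix (Fin r) (Fin r) ℂ)
    (hfact : IsElPsdFactorization P lam r C D) :
    GeneratesWithNoise P lam r := by
  obtain ⟨hC, hD, hP, hCu, hDu, hCE, hDE⟩ := hfact
  obtain ⟨R, hRH, hR, hRR⟩ :=
    exists_isHermitian_mul_self_eq (posSemidef_sum _ fun x _ => hC x) hCu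
  obtain ⟨W, hWH, hW, hWW⟩ :=
    exists_isHermitian_mul_self_eq (posSemidef_sum _ fun y _ => hD y) hDu
  refine ⟨outerProj fun p => (R * W) p.1 p.2, fun x => noisyEffectInv lam (R⁻¹ * C x * R⁻¹),
    fun y => (noisyEffectInv lam (W⁻¹ * D y * W⁻¹))ᵀ, posSemidef_outerProj _, ?_,
    isPOVM_noisyEffectInv_whiten hlam1 hRH hR hRR hCE,
    (isPOVM_noisyEffectInv_whiten hlam1 hWH hW hWW hDE).transpose, fun x y => ?_⟩
  · calc (outerProj fun p : Fin r × Fin r => (R * W) p.1 p.2).trace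
          = (R * W * (R * W)ᴴ).trace := trace_outerProj_vec _
      _ = ((∑ x, C x) * ∑ y, D y).trace := by
          rw [conjTranspose_mul, hWH.eq, hRH.eq, ← hRR, ← hWW, ← Matrix.mul_assoc, trace_mul_comm]
          simp only [Matrix.mul_assoc]
      _ = ∑ x, ∑ y, (P x y : ℂ) := by
          simp only [Finset.sum_mul_sum, trace_sum, hP]
      _ = 1 := by exact_mod_cast hsum
  · rw [noisyEffect_transpose, noisyEffect_noisyEffectInv hlam1.ne,
      noisyEffect_noisyEffectInv hlam1.ne, trace_kronecker_mul_outerProj, transpose_transpose,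
      trace_inv_conj_mul_inv_conj hRH hWH hR hW, hP]

/-- an 𝔈_λ-PSD factorization of size r of a correlation P yields a noisy
quantum protocol generating P with local dimension r; in particular
C_λ(P) ≤ rank_psd^{𝔈_λ}(P). -/
theorem generates_of_ElPsdFactorization
    {n : ℕ} (P : Matrix (Fin n) (Fin n) ℝ)
    (hpos : ∀ x y, 0 < P x y) (hsum : ∑ x, ∑ y, P x y = 1)
    (lam : ℝ) (hlam0 : 0 ≤ lam) (hlam1 : lam < 1)
    (r : ℕ) (C D : Fin n → Matrix (Fin r) (Fin r) ℂ)
    (hfact : IsElPsdFactorization P lam r C D) :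
    GeneratesWithNoise P lam r :=
  generates_of_ElPsdFactorization_general P hsum lam hlam1 r C D hfact

end
end

section
/- Let P be an n×n correlation with strictly positive entries, n ≥ 2, let 0 ≤ λ < 1, and suppose s, t ∈ ℝ_{>0}^n with ‖s‖₁ = ‖t‖₁ = 1 satisfy P̂_λ^{s,t}(x,y) ≥ 0 for all x, y. Then P can be generated under depolarizing noise of strength λ with local dimension d = rank_psd(P̂_λ^{s,t}) · ⌈1 / min_{x,y}{s_x, t_y}⌉; in particular C_λ(P) ≤ rank_psd(P̂_λ^{s,t}) · ⌈1 / min_{x,y}{s_x, t_y}⌉. -/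
/-!
Write `c = 1 - λ`. Since `∑ s = ∑ t = 1`, the map `P ↦ P̂` is `P ↦ (I - λ s 1ᵀ) P (I - λ 1 tᵀ)`,
whose inverse gives `c² P = (c I + λ s 1ᵀ) P̂ (c I + λ 1 tᵀ)`. This inverse is realized by a
classical, i.e. diagonal, strategy in any dimension `d` with `d s_x ≥ 1` and `d t_y ≥ 1`: the state
is the distribution `P̂ / c²` on the first `n × n` block, and `E_x` is the indicator of the
coordinate `x` among the first `n`, padded on the remaining `d - n` coordinates so that
`tr E_x = d s_x`; depolarizing then turns `E_x` into `c E_x + λ s_x`. The dimension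
`rank_psd(P̂) · ⌈1 / min(s, t)⌉` is such a `d`, because `P̂ ≠ 0` has positive PSD-rank.
-/

open Matrix BigOperators Finset
open scoped Kronecker ComplexOrder

noncomputable section

theorem sum_sum_ite_add_mul_ite_add_mul {ι R : Type*} [Fintype ι] [DecidableEq ι] [CommRing R]
    (Q : ι → ι → R) (c u v : R) (x y : ι) :
    ∑ a, ∑ b, (c * (if a = x then 1 else 0) + u) * (c * (if b = y then 1 else 0) + v) * Q a b =
      c ^ 2 * Q x y + c * v * ∑ b, Q x b + c * u * ∑ a, Q a y + u * v * ∑ a, ∑ b, Q a b := by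
  simp only [add_mul, mul_add, sum_add_distrib, mul_ite, ite_mul, mul_one, mul_zero,
    zero_mul, sum_ite_irrel, sum_const_zero, sum_ite_eq',
    mem_univ, if_true, ← mul_sum]
  ring

section Phat

variable {n : ℕ} (P : Matrix (Fin n) (Fin n) ℝ) (lam : ℝ) (s t : Fin n → ℝ)

theorem sum_phat_right (ht1 : ∑ y, t y = 1) (hsum : ∑ x, ∑ y, P x y = 1) (x : Fin n) :
    ∑ y, Phat P lam s t x y = (1 - lam) * (∑ y, P x y - lam * s x) := by
  simp only [Phat, sum_add_distrib, sum_sub_distrib, ← mul_sum,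
    ← sum_mul]
  rw [sum_comm, hsum, ht1]
  ring

theorem sum_phat_left (hs1 : ∑ x, s x = 1) (hsum : ∑ x, ∑ y, P x y = 1) (y : Fin n) :
    ∑ x, Phat P lam s t x y = (1 - lam) * (∑ x, P x y - lam * t y) := by
  simp only [Phat, sum_add_distrib, sum_sub_distrib, ← mul_sum,
    ← sum_mul]
  rw [hsum, hs1]
  ring

theorem sum_sum_phat (hs1 : ∑ x, s x = 1) (ht1 : ∑ y, t y = 1) (hsum : ∑ x, ∑ y, P x y = 1) :
    ∑ x, ∑ y, Phat P lam s t x y = (1 - lam) ^ 2 := by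
  simp only [sum_phat_right P lam s t ht1 hsum, ← mul_sum, sum_sub_distrib, hsum, hs1]
  ring

theorem of_phat_ne_zero (hlam : lam ≠ 1) (hs1 : ∑ x, s x = 1) (ht1 : ∑ y, t y = 1)
    (hsum : ∑ x, ∑ y, P x y = 1) : Matrix.of (fun x y => Phat P lam s t x y) ≠ 0 := by
  intro h
  have hzero (x y : Fin n) : Phat P lam s t x y = 0 := congrFun₂ h x y
  have htot := sum_sum_phat P lam s t hs1 ht1 hsum
  simp only [hzero, sum_const_zero] at htot
  exact pow_ne_zero 2 (sub_ne_zero.mpr hlam.symm) htot.symm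

theorem sq_one_sub_mul_eq_sum_sum_phat (hs1 : ∑ x, s x = 1) (ht1 : ∑ y, t y = 1)
    (hsum : ∑ x, ∑ y, P x y = 1) (x y : Fin n) :
    (1 - lam) ^ 2 * P x y = ∑ a, ∑ b, ((1 - lam) * (if a = x then 1 else 0) + lam * s x) *
      ((1 - lam) * (if b = y then 1 else 0) + lam * t y) * Phat P lam s t a b := by
  rw [sum_sum_ite_add_mul_ite_add_mul, sum_phat_right P lam s t ht1 hsum,
    sum_phat_left P lam s t hs1 hsum, sum_sum_phat P lam s t hs1 ht1 hsum, Phat]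
  ring

end Phat

theorem psdRank_pos {m n : ℕ} {M : Matrix (Fin m) (Fin n) ℝ} (hM : ∀ x y, 0 ≤ M x y)
    (hM0 : M ≠ 0) : 0 < PsdRank M := by
  classical
  refine Nat.pos_of_ne_zero fun h => ?_
  rcases Nat.sInf_eq_zero.mp h with ⟨C, D, -, -, hCD⟩ | hempty
  · refine hM0 (Matrix.ext fun x y => ?_)
    simpa [Matrix.trace] using hCD x y
  · refine (Set.eq_empty_iff_forall_notMem.mp hempty m) ⟨fun x => diagonal fun i =>
      if i = x then 1 else 0, fun y => diagonal fun i => (M i y : ℂ), fun x => ?_, fun y => ?_,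
      fun x y => ?_⟩
    · exact posSemidef_diagonal_iff.mpr fun i => by split_ifs <;> simp
    · exact posSemidef_diagonal_iff.mpr fun i => Complex.zero_le_real.mpr (hM i y)
    · simp [diagonal_mul_diagonal, trace_diagonal]

def classicalNoisyEffect {d : ℕ} (lam : ℝ) (e : Fin d → ℝ) (i : Fin d) : ℝ :=
  (1 - lam) * e i + lam * (∑ j, e j) / d

theorem classicalNoisyEffect_of_sum_eq {d : ℕ} {lam c : ℝ} {e : Fin d → ℝ} (hd : d ≠ 0)
    (he : ∑ j, e j = d * c) (i : Fin d) :
    classicalNoisyEffect lam e i = (1 - lam) * e i + lam * c := by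
  have hd' : (d : ℝ) ≠ 0 := by exact_mod_cast hd
  rw [classicalNoisyEffect, he]
  field_simp

theorem noisyEffect_diagonal {d : ℕ} (lam : ℝ) (e : Fin d → ℝ) :
    noisyEffect lam (diagonal fun i => (e i : ℂ)) =
      diagonal fun i => (classicalNoisyEffect lam e i : ℂ) := by
  ext i j
  by_cases hij : i = j
  · subst hij
    simp [noisyEffect, classicalNoisyEffect, trace_diagonal]
  · simp [noisyEffect, hij]

theorem isPOVM_diagonal {n d : ℕ} (e : Fin n → Fin d → ℝ) (he : ∀ x i, 0 ≤ e x i)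
    (he1 : ∀ i, ∑ x, e x i = 1) : IsPOVM fun x => diagonal fun i => (e x i : ℂ) := by
  refine ⟨fun x => posSemidef_diagonal_iff.mpr fun i => Complex.zero_le_real.mpr (he x i), ?_⟩
  ext i j
  rcases eq_or_ne i j with rfl | hij
  · simpa [Matrix.sum_apply] using congrArg Complex.ofReal (he1 i)
  · simp [Matrix.sum_apply, hij]

theorem generatesWithNoise_of_diagonal {n d : ℕ} {P : Matrix (Fin n) (Fin n) ℝ} {lam : ℝ}
    (e f : Fin n → Fin d → ℝ) (q : Fin d → Fin d → ℝ)
    (he : ∀ x i, 0 ≤ e x i) (he1 : ∀ i, ∑ x, e x i = 1)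
    (hf : ∀ y j, 0 ≤ f y j) (hf1 : ∀ j, ∑ y, f y j = 1)
    (hq : ∀ i j, 0 ≤ q i j) (hq1 : ∑ i, ∑ j, q i j = 1)
    (hP : ∀ x y, P x y = ∑ i, ∑ j,
      classicalNoisyEffect lam (e x) i * classicalNoisyEffect lam (f y) j * q i j) :
    GeneratesWithNoise P lam d := by
  refine ⟨diagonal fun p => (q p.1 p.2 : ℂ), _, _,
    posSemidef_diagonal_iff.mpr fun p => Complex.zero_le_real.mpr (hq p.1 p.2), ?_,
    isPOVM_diagonal e he he1, isPOVM_diagonal f hf hf1, fun x y => ?_⟩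
  · rw [trace_diagonal, Fintype.sum_prod_type]
    exact_mod_cast hq1
  · rw [noisyEffect_diagonal, noisyEffect_diagonal, diagonal_kronecker_diagonal,
      diagonal_mul_diagonal, trace_diagonal, Fintype.sum_prod_type, hP]
    push_cast
    rfl

def paddedResponse {n k : ℕ} (x : Fin n) (w : ℝ) : Fin (n + k) → ℝ :=
  Fin.append (fun a => if a = x then 1 else 0) fun _ => w

section paddedResponse

variable {n k : ℕ}

theorem paddedResponse_nonneg (x : Fin n) {w : ℝ} (hw : 0 ≤ w) (i : Fin (n + k)) :
    0 ≤ paddedResponse x w i := by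
  refine Fin.addCases (fun a => ?_) (fun b => ?_) i
  · simp only [paddedResponse, Fin.append_left]
    positivity
  · simpa [paddedResponse] using hw

theorem sum_paddedResponse (x : Fin n) (w : ℝ) :
    ∑ i, paddedResponse (k := k) x w i = 1 + k * w := by
  simp [paddedResponse, Fin.sum_univ_add]

theorem sum_paddedResponse_apply (w : Fin n → ℝ) (hw1 : ∑ x, w x = 1) (i : Fin (n + k)) :
    ∑ x, paddedResponse x (w x) i = 1 := by
  refine Fin.addCases (fun a => ?_) (fun b => ?_) i <;>
    simp [paddedResponse, hw1]

theorem classicalNoisyEffect_paddedResponse (lam : ℝ) (x : Fin n) {w c : ℝ}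
    (hw : 1 + k * w = (n + k) * c) (i : Fin (n + k)) :
    classicalNoisyEffect lam (paddedResponse x w) i = (1 - lam) * paddedResponse x w i + lam * c :=
  classicalNoisyEffect_of_sum_eq (by have := x.pos; omega)
    (by rw [sum_paddedResponse, hw]; push_cast; rfl) i

end paddedResponse

theorem exists_filler_weights {n k : ℕ} (s : Fin n → ℝ) (hs1 : ∑ x, s x = 1)
    (hs : ∀ x, 1 ≤ (n + k : ℝ) * s x) :
    ∃ w : Fin n → ℝ, (∀ x, 0 ≤ w x) ∧ ∑ x, w x = 1 ∧ ∀ x, 1 + k * w x = (n + k) * s x := by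
  rcases Nat.eq_zero_or_pos k with rfl | hk
  -- without padding coordinates, `1 ≤ n s_x` and `∑ s = 1` force `s` to be uniform
  · simp only [CharP.cast_eq_zero, add_zero] at hs
    have hdev : ∑ x, ((n : ℝ) * s x - 1) = 0 := by
      simp [sum_sub_distrib, ← mul_sum, hs1]
    have hunif := (sum_eq_zero_iff_of_nonneg fun x _ => by linarith [hs x]).mp hdev
    refine ⟨s, fun x => ?_, hs1, fun x => by linarith [hunif x (mem_univ x)]⟩
    exact (pos_of_mul_pos_right (by linarith [hs x]) n.cast_nonneg).le
  · refine ⟨fun x => ((n + k) * s x - 1) / k,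
      fun x => div_nonneg (by linarith [hs x]) (by positivity), ?_, fun x => ?_⟩
    · rw [← sum_div, sum_sub_distrib, ← mul_sum, hs1]
      field_simp
      simp
    · field_simp
      ring

theorem generatesWithNoise_add {n k : ℕ} {P : Matrix (Fin n) (Fin n) ℝ} {lam : ℝ}
    {s t w v : Fin n → ℝ} (hlam : lam ≠ 1) (hsum : ∑ x, ∑ y, P x y = 1)
    (hs1 : ∑ x, s x = 1) (ht1 : ∑ y, t y = 1) (hP : ∀ x y, 0 ≤ Phat P lam s t x y)
    (hw : ∀ x, 0 ≤ w x) (hw1 : ∑ x, w x = 1) (hws : ∀ x, 1 + k * w x = (n + k) * s x)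
    (hv : ∀ y, 0 ≤ v y) (hv1 : ∑ y, v y = 1) (hvt : ∀ y, 1 + k * v y = (n + k) * t y) :
    GeneratesWithNoise P lam (n + k) := by
  have hc : (1 - lam) ^ 2 ≠ 0 := pow_ne_zero 2 (sub_ne_zero.mpr hlam.symm)
  let q : Fin (n + k) → Fin (n + k) → ℝ :=
    Fin.append (fun a => Fin.append (fun b => Phat P lam s t a b / (1 - lam) ^ 2) 0) 0
  refine generatesWithNoise_of_diagonal (fun x => paddedResponse x (w x))
    (fun y => paddedResponse y (v y)) q (fun x => paddedResponse_nonneg x (hw x))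
    (sum_paddedResponse_apply w hw1) (fun y => paddedResponse_nonneg y (hv y))
    (sum_paddedResponse_apply v hv1) (fun i j => ?_) ?_ fun x y => ?_
  · refine Fin.addCases (fun a => ?_) (fun b => ?_) i
    · refine Fin.addCases (fun c => ?_) (fun d => ?_) j
      · simpa [q] using div_nonneg (hP a c) (sq_nonneg (1 - lam))
      · simp [q]
    · simp [q]
  · simp [q, Fin.sum_univ_add, ← sum_div, sum_sum_phat P lam s t hs1 ht1 hsum, hc]
  · simp only [classicalNoisyEffect_paddedResponse lam x (hws x),
      classicalNoisyEffect_paddedResponse lam y (hvt y)]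
    simp only [q, paddedResponse, Fin.sum_univ_add, Fin.append_left, Fin.append_right,
      Pi.zero_apply, mul_zero, sum_const_zero, add_zero, mul_div_assoc', ← sum_div]
    rw [eq_div_iff hc, mul_comm, sq_one_sub_mul_eq_sum_sum_phat P lam s t hs1 ht1 hsum]

theorem generatesWithNoise_of_one_le_mul {n d : ℕ} {P : Matrix (Fin n) (Fin n) ℝ} {lam : ℝ}
    {s t : Fin n → ℝ} (hlam : lam ≠ 1) (hsum : ∑ x, ∑ y, P x y = 1)
    (hs1 : ∑ x, s x = 1) (ht1 : ∑ y, t y = 1) (hP : ∀ x y, 0 ≤ Phat P lam s t x y)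
    (hds : ∀ x, 1 ≤ (d : ℝ) * s x) (hdt : ∀ y, 1 ≤ (d : ℝ) * t y) :
    GeneratesWithNoise P lam d := by
  have hnd : n ≤ d := by
    have := sum_le_sum fun x (_ : x ∈ univ) => hds x
    rw [← mul_sum, hs1] at this
    exact_mod_cast (by simpa using this : (n : ℝ) ≤ d)
  obtain ⟨k, rfl⟩ := Nat.exists_eq_add_of_le hnd
  push_cast at hds hdt
  obtain ⟨w, hw, hw1, hws⟩ := exists_filler_weights s hs1 hds
  obtain ⟨v, hv, hv1, hvt⟩ := exists_filler_weights t ht1 hdt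
  exact generatesWithNoise_add hlam hsum hs1 ht1 hP hw hw1 hws hv hv1 hvt

theorem one_le_mul_of_ceil_inv_le {m a : ℝ} {d : ℕ} (hm : 0 < m) (hma : m ≤ a)
    (hd : ⌈1 / m⌉₊ ≤ d) : 1 ≤ (d : ℝ) * a := by
  have h : 1 / m ≤ d := (Nat.le_ceil _).trans (by exact_mod_cast hd)
  calc (1 : ℝ) = 1 / m * m := by field_simp
    _ ≤ d * a := mul_le_mul h hma hm.le (by positivity)

/-- from positive s, t with ‖s‖₁ = ‖t‖₁ = 1 making P̂_λ^{s,t} entrywise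
nonnegative, one can generate P under noise strength λ with local dimension
rank_psd(P̂_λ^{s,t}) · ⌈1 / min_{x,y}{s_x, t_y}⌉; in particular C_λ(P) is at most
this quantity. -/
theorem generates_dim_psdRank_mul_ceil
    {n : ℕ} (hn : 2 ≤ n) (P : Matrix (Fin n) (Fin n) ℝ)
    (hsum : ∑ x, ∑ y, P x y = 1)
    (lam : ℝ) (hlam1 : lam < 1)
    (s t : Fin n → ℝ) (hs : ∀ x, 0 < s x) (ht : ∀ y, 0 < t y)
    (hs1 : (∑ x, s x) = 1) (ht1 : (∑ y, t y) = 1)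
    (hP : ∀ x y, 0 ≤ Phat P lam s t x y) :
    GeneratesWithNoise P lam
      (PsdRank (Matrix.of fun x y => Phat P lam s t x y) *
        ⌈1 / (min (Finset.univ.inf' ⟨⟨0, by omega⟩, Finset.mem_univ _⟩ s)
                  (Finset.univ.inf' ⟨⟨0, by omega⟩, Finset.mem_univ _⟩ t))⌉₊) := by
  set m := min (univ.inf' ⟨⟨0, by omega⟩, mem_univ _⟩ s) (univ.inf' ⟨⟨0, by omega⟩, mem_univ _⟩ t)
  have hm : 0 < m :=
    lt_min ((lt_inf'_iff _).mpr fun x _ => hs x) ((lt_inf'_iff _).mpr fun y _ => ht y)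
  have hr := psdRank_pos (fun x y => hP x y) (of_phat_ne_zero P lam s t hlam1.ne hs1 ht1 hsum)
  have hd := Nat.le_mul_of_pos_left ⌈1 / m⌉₊ hr
  exact generatesWithNoise_of_one_le_mul hlam1.ne hsum hs1 ht1 hP
    (fun x => one_le_mul_of_ceil_inv_le hm ((min_le_left _ _).trans (inf'_le _ (mem_univ x))) hd)
    (fun y => one_le_mul_of_ceil_inv_le hm ((min_le_right _ _).trans (inf'_le _ (mem_univ y))) hd)

end
end

section
/- Fix k ∈ (0,1) and an integer m ≥ 1, and let B_m be the associated m×m correlation. If 1 − √k < λ < 1, then there exist no dimension d, density matrix σ on ℂ^d ⊗ ℂ^d, and POVMs {E_x}, {F_y} generating B_m under depolarizing noise of strength λ; i.e., B_m is unreachable for every noisy quantum protocol when λ > 1 − √k. -/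
open Matrix BigOperators Finset
open scoped Kronecker ComplexOrder

noncomputable section

/-! Depolarizing noise is affine in the effects, so for any correlation `P` generated from a state
`σ` and POVMs `E`, `F`, the gap between the product of its marginals and `P x y` is
`(1 - λ)² (⟨E x ⊗ 1⟩ ⟨1 ⊗ F y⟩ - ⟨E x ⊗ F y⟩) ≤ (1 - λ)² ⟨E x ⊗ 1⟩ ⟨1 ⊗ F y⟩`. Along the
antidiagonal `y = -x` the correlation `B_m` has marginals `1/m` and gap `k/m²`; summing square
roots and applying Cauchy–Schwarz to the noiseless marginals gives `√k ≤ 1 - λ`. For `m ≤ 1` the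
total mass of `B_m` is not `1`. -/

open scoped MatrixOrder in
theorem Matrix.PosSemidef.trace_mul_nonneg_s12 {n 𝕜 : Type*} [Fintype n] [RCLike 𝕜]
    {A B : Matrix n n 𝕜} (hA : A.PosSemidef) (hB : B.PosSemidef) : 0 ≤ (A * B).trace := by
  classical
  obtain ⟨a, rfl⟩ := CStarAlgebra.nonneg_iff_eq_star_mul_self.mp hA.nonneg
  rw [star_eq_conjTranspose, Matrix.mul_assoc, trace_mul_comm]
  exact (hB.mul_mul_conjTranspose_same a).trace_nonneg

theorem Matrix.kronecker_sum {α l m n p ι : Type*} [CommSemiring α] (A : Matrix l m α)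
    (s : Finset ι) (B : ι → Matrix n p α) : A ⊗ₖ (∑ i ∈ s, B i) = ∑ i ∈ s, A ⊗ₖ B i :=
  map_sum (kroneckerBilinear (R := α) A) B s

theorem Matrix.sum_kronecker {α l m n p ι : Type*} [CommSemiring α] (s : Finset ι)
    (A : ι → Matrix l m α) (B : Matrix n p α) : (∑ i ∈ s, A i) ⊗ₖ B = ∑ i ∈ s, A i ⊗ₖ B :=
  map_sum ((kroneckerBilinear (R := α)).flip B) A s

section NoisyEffect

variable {d : ℕ} (lam : ℝ)

theorem sum_noisyEffect {ι : Type*} [Fintype ι] {E : ι → Matrix (Fin d) (Fin d) ℂ}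
    (hE : ∑ x, E x = 1) : ∑ x, noisyEffect lam (E x) = 1 := by
  rcases eq_or_ne d 0 with rfl | hd
  · exact Subsingleton.elim _ _
  simp only [noisyEffect, sum_add_distrib, ← smul_sum, ← sum_smul, ← sum_div, ← mul_sum,
    ← trace_sum, hE, trace_one, Fintype.card_fin]
  rw [mul_div_cancel_right₀ _ (Nat.cast_ne_zero.mpr hd), ← add_smul, Complex.ofReal_sub,
    Complex.ofReal_one, sub_add_cancel, one_smul]

variable (σ : Matrix (Fin d × Fin d) (Fin d × Fin d) ℂ)

theorem trace_noisyEffect_kronecker_mul (A B : Matrix (Fin d) (Fin d) ℂ) :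
    ((noisyEffect lam A ⊗ₖ B) * σ).trace
      = ((1 - lam : ℝ) : ℂ) * ((A ⊗ₖ B) * σ).trace
        + (lam : ℂ) * A.trace / d * ((1 ⊗ₖ B) * σ).trace := by
  simp only [noisyEffect, add_kronecker, smul_kronecker, Matrix.add_mul, Matrix.smul_mul,
    trace_add, trace_smul, smul_eq_mul]

theorem trace_kronecker_noisyEffect_mul (A B : Matrix (Fin d) (Fin d) ℂ) :
    ((A ⊗ₖ noisyEffect lam B) * σ).trace
      = ((1 - lam : ℝ) : ℂ) * ((A ⊗ₖ B) * σ).trace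
        + (lam : ℂ) * B.trace / d * ((A ⊗ₖ 1) * σ).trace := by
  simp only [noisyEffect, kronecker_add, kronecker_smul, Matrix.add_mul, Matrix.smul_mul,
    trace_add, trace_smul, smul_eq_mul]

end NoisyEffect

section Generation

variable {n d : ℕ} {P : Matrix (Fin n) (Fin n) ℝ} {lam : ℝ}
  {σ : Matrix (Fin d × Fin d) (Fin d × Fin d) ℂ} {E F : Fin n → Matrix (Fin d) (Fin d) ℂ}

theorem sum_mul_sum_sub_eq_of_generates (hσ : σ.trace = 1) (hE : ∑ x, E x = 1)
    (hF : ∑ y, F y = 1)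
    (hP : ∀ x y, (P x y : ℂ) = ((noisyEffect lam (E x) ⊗ₖ noisyEffect lam (F y)) * σ).trace)
    (x y : Fin n) :
    (((∑ b, P x b) * (∑ a, P a y) - P x y : ℝ) : ℂ) = ((1 - lam : ℝ) : ℂ) ^ 2 *
      (((E x ⊗ₖ 1) * σ).trace * ((1 ⊗ₖ F y) * σ).trace - ((E x ⊗ₖ F y) * σ).trace) := by
  have hrow : ((∑ b, P x b : ℝ) : ℂ) = ((1 - lam : ℝ) : ℂ) * ((E x ⊗ₖ 1) * σ).trace
      + (lam : ℂ) * (E x).trace / d := by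
    rw [Complex.ofReal_sum]
    simp_rw [hP, ← trace_sum, ← Finset.sum_mul, ← kronecker_sum, sum_noisyEffect lam hF,
      trace_noisyEffect_kronecker_mul, one_kronecker_one, Matrix.one_mul, hσ, mul_one]
  have hcol : ((∑ a, P a y : ℝ) : ℂ) = ((1 - lam : ℝ) : ℂ) * ((1 ⊗ₖ F y) * σ).trace
      + (lam : ℂ) * (F y).trace / d := by
    rw [Complex.ofReal_sum]
    simp_rw [hP, ← trace_sum, ← Finset.sum_mul, ← sum_kronecker, sum_noisyEffect lam hE,
      trace_kronecker_noisyEffect_mul, one_kronecker_one, Matrix.one_mul, hσ, mul_one]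
  rw [Complex.ofReal_sub, Complex.ofReal_mul, hrow, hcol, hP, trace_noisyEffect_kronecker_mul,
    trace_kronecker_noisyEffect_mul, trace_kronecker_noisyEffect_mul, one_kronecker_one,
    Matrix.one_mul, hσ]
  ring

theorem GeneratesWithNoise.sum_sum_eq_one (h : GeneratesWithNoise P lam d) :
    ∑ x, ∑ y, P x y = 1 := by
  obtain ⟨σ, E, F, -, hσ, ⟨-, hE⟩, ⟨-, hF⟩, hP⟩ := h
  suffices ((∑ x, ∑ y, P x y : ℝ) : ℂ) = 1 by exact_mod_cast this
  push_cast
  simp_rw [hP, ← trace_sum, ← Finset.sum_mul, ← kronecker_sum, sum_noisyEffect lam hF,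
    ← sum_kronecker, sum_noisyEffect lam hE, one_kronecker_one, Matrix.one_mul, hσ]

theorem GeneratesWithNoise.exists_marginals (h : GeneratesWithNoise P lam d) :
    ∃ u v : Fin n → ℝ, (∀ x, 0 ≤ u x) ∧ (∀ y, 0 ≤ v y) ∧ ∑ x, u x = 1 ∧ ∑ y, v y = 1 ∧
      ∀ x y, (∑ b, P x b) * (∑ a, P a y) - P x y ≤ (1 - lam) ^ 2 * (u x * v y) := by
  obtain ⟨σ, E, F, hσ, hσtr, ⟨hE, hE1⟩, ⟨hF, hF1⟩, hP⟩ := h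
  have hreal {A} (hA : A.PosSemidef) :
      (A * σ).trace = ((A * σ).trace.re : ℂ) ∧ 0 ≤ (A * σ).trace.re := by
    obtain ⟨hre, him⟩ := Complex.nonneg_iff.mp (hA.trace_mul_nonneg_s12 hσ)
    exact ⟨Complex.ext rfl (by simpa using him.symm), hre⟩
  have hone : (1 : Matrix (Fin d) (Fin d) ℂ).PosSemidef := .one
  refine ⟨fun x => ((E x ⊗ₖ 1) * σ).trace.re, fun y => ((1 ⊗ₖ F y) * σ).trace.re,
    fun x => (hreal ((hE x).kronecker hone)).2, fun y => (hreal (hone.kronecker (hF y))).2,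
    ?_, ?_, fun x y => ?_⟩
  · rw [← Complex.re_sum, ← trace_sum, ← Finset.sum_mul, ← sum_kronecker, hE1,
      one_kronecker_one, Matrix.one_mul, hσtr, Complex.one_re]
  · rw [← Complex.re_sum, ← trace_sum, ← Finset.sum_mul, ← kronecker_sum, hF1,
      one_kronecker_one, Matrix.one_mul, hσtr, Complex.one_re]
  have hdef := sum_mul_sum_sub_eq_of_generates hσtr hE1 hF1 hP x y
  obtain ⟨htr, ht⟩ := hreal ((hE x).kronecker (hF y))
  rw [(hreal ((hE x).kronecker hone)).1, (hreal (hone.kronecker (hF y))).1, htr] at hdef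
  norm_cast at hdef
  rw [hdef]
  nlinarith [sq_nonneg (1 - lam)]

theorem GeneratesWithNoise.sum_sqrt_le (h : GeneratesWithNoise P lam d) (π : Equiv.Perm (Fin n)) :
    ∑ x, √((∑ b, P x b) * (∑ a, P a (π x)) - P x (π x)) ≤ |1 - lam| := by
  obtain ⟨u, v, hu, hv, hu1, hv1, hdef⟩ := h.exists_marginals
  calc ∑ x, √((∑ b, P x b) * (∑ a, P a (π x)) - P x (π x))
      ≤ ∑ x, |1 - lam| * (√(u x) * √(v (π x))) := by
        refine sum_le_sum fun x _ => (Real.sqrt_le_sqrt (hdef x (π x))).trans_eq ?_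
        rw [Real.sqrt_mul (sq_nonneg _), Real.sqrt_sq_eq_abs, Real.sqrt_mul (hu x)]
    _ ≤ |1 - lam| * (√(∑ x, u x) * √(∑ x, v (π x))) := by
        rw [← mul_sum]
        gcongr
        exact Real.sum_sqrt_mul_sqrt_le _ hu fun x => hv _
    _ = |1 - lam| := by rw [Equiv.sum_comp, hu1, hv1, Real.sqrt_one, mul_one, mul_one]

end Generation

open Real in
theorem sum_cos_two_pi_mul_add_div_eq_zero {m : ℕ} (hm : 2 ≤ m) (c : ℝ) :
    ∑ y : Fin m, cos (2 * π * (c + y) / m) = 0 := by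
  set ζ := Complex.exp (2 * π * Complex.I / m)
  have hexp (y : Fin m) : Complex.exp ((2 * π * (c + y) / m : ℝ) * Complex.I)
      = Complex.exp (c * (2 * π * Complex.I / m)) * ζ ^ (y : ℕ) := by
    rw [← Complex.exp_nat_mul, ← Complex.exp_add]
    push_cast
    ring_nf
  calc ∑ y : Fin m, cos (2 * π * (c + y) / m)
      = (Complex.exp (c * (2 * π * Complex.I / m)) * ∑ i ∈ range m, ζ ^ i).re := by
        simp only [← Fin.sum_univ_eq_sum_range, Finset.mul_sum, Complex.re_sum, ← hexp,
          Complex.exp_ofReal_mul_I_re]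
    _ = 0 := by
        rw [(Complex.isPrimitiveRoot_exp m (by omega)).geom_sum_eq_zero (by omega), mul_zero,
          Complex.zero_re]

section Bmat

variable {m : ℕ} (k : ℝ)

theorem Bmat_symm (x y : Fin m) : Bmat m k x y = Bmat m k y x := by
  simp only [Bmat, of_apply, add_comm]

theorem Bmat_sum_row (hm : 2 ≤ m) (x : Fin m) : ∑ y, Bmat m k x y = 1 / m := by
  simp only [Bmat, of_apply, ← mul_sum, sum_sub_distrib, sum_const, card_univ, Fintype.card_fin,
    nsmul_eq_mul, mul_one, sum_cos_two_pi_mul_add_div_eq_zero hm, mul_zero, sub_zero]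
  field_simp

theorem Bmat_apply_neg [NeZero m] (x : Fin m) : Bmat m k x (-x) = (1 - k) / m ^ 2 := by
  obtain ⟨j, hj⟩ : m ∣ x.val + (-x).val := by
    have h := congrArg Fin.val (add_neg_cancel x)
    rw [Fin.val_add, Fin.val_zero] at h
    exact Nat.dvd_of_mod_eq_zero h
  have hsum : (x.val : ℝ) + ((-x).val : ℝ) = j * m := by
    rw [mul_comm]; exact_mod_cast hj
  have hm : (m : ℝ) ≠ 0 := Nat.cast_ne_zero.mpr (NeZero.ne m)
  simp only [Bmat, of_apply, hsum]
  rw [show 2 * Real.pi * (j * m) / m = j * (2 * Real.pi) by field_simp, Real.cos_nat_mul_two_pi]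
  ring

theorem Bmat_sum_sqrt_antidiagonal (hm : 2 ≤ m) :
    ∑ x : Fin m, √((∑ b, Bmat m k x b) * (∑ a, Bmat m k a (-x)) - Bmat m k x (-x)) = √k := by
  have : NeZero m := ⟨by omega⟩
  have hcol (y : Fin m) : ∑ a, Bmat m k a y = 1 / m := by
    simp only [Bmat_symm k _ y, Bmat_sum_row k hm]
  simp only [Bmat_sum_row k hm, hcol, Bmat_apply_neg, sum_const, card_univ, Fintype.card_fin,
    nsmul_eq_mul]
  rw [show 1 / (m : ℝ) * (1 / m) - (1 - k) / m ^ 2 = k / m ^ 2 by ring,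
    Real.sqrt_div' _ (by positivity), Real.sqrt_sq (by positivity)]
  field_simp

end Bmat

theorem Bmat_unreachable_above_threshold_general
    (k : ℝ) (hk0 : 0 < k) (m : ℕ)
    (lam : ℝ) (hlow : 1 - Real.sqrt k < lam) (hhigh : lam < 1) :
    ∀ d : ℕ, ¬ GeneratesWithNoise (Bmat m k) lam d := by
  intro d h
  obtain hm | hm := lt_or_ge m 2
  · have hmass := h.sum_sum_eq_one
    interval_cases m
    · simp at hmass
    · have hB : Bmat 1 k 0 0 = 1 - k := by simp [Bmat]
      rw [Fin.sum_univ_one, Fin.sum_univ_one, hB] at hmass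
      linarith
  · have hbound := h.sum_sqrt_le (Equiv.neg (Fin m))
    rw [Equiv.neg_apply, Bmat_sum_sqrt_antidiagonal k hm, abs_of_pos (by linarith)] at hbound
    linarith

/-- for noise strengths λ with 1 − √k < λ < 1, the correlation B_m cannot
be generated by any noisy quantum protocol of any local dimension. -/
theorem Bmat_unreachable_above_threshold
    (k : ℝ) (hk0 : 0 < k) (hk1 : k < 1) (m : ℕ) (hm : 1 ≤ m)
    (lam : ℝ) (hlow : 1 - Real.sqrt k < lam) (hhigh : lam < 1) :
    ∀ d : ℕ, ¬ GeneratesWithNoise (Bmat m k) lam d :=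
  Bmat_unreachable_above_threshold_general k hk0 m lam hlow hhigh
end
end

section
/- Fix k ∈ (0,1) and an integer m ≥ 2, and let B_m be the associated m×m correlation. If 0 ≤ λ ≤ 1 − √k, then C_λ(B_m) = 2: there exist a density matrix σ on ℂ² ⊗ ℂ² and POVMs {E_x}, {F_y} on ℂ² generating B_m under depolarizing noise of strength λ, while no protocol with local dimension 1 can generate B_m. In particular the cost of the optimal noisy quantum protocol for B_m is constant on the whole interval [0, 1 − √k]. -/
/-! With `ζ_x = exp (2πix/m)`, take Alice's and Bob's effects `[[1/m, ±b ζ̄_x], [±b ζ_x, 1/m]]`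
and the maximally entangled state, for which `tr ((A ⊗ B) Φ) = tr (A Bᵀ) / 2`. Depolarizing noise
only scales the off-diagonal entries by `1 - λ`, so the protocol outputs
`1/m² - (1 - λ)² b² cos (2π(x+y)/m)`, which is `B_m` for `b = √k / ((1 - λ) m)`; these effects are
positive exactly when `b ≤ 1/m`, i.e. `λ ≤ 1 - √k`, and they sum to the identity because the
`m`-th roots of unity sum to zero.

In local dimension one the noise acts trivially, so `B_m` would have rank one; as all its row sums
equal `1/m`, its rows would then coincide, but `B_m(0,0) ≠ B_m(1,0)`. -/

open Matrix BigOperators Finset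
open scoped Kronecker ComplexOrder

noncomputable section

section Bell

variable {ι : Type*} [Fintype ι]

lemma outerProj_posSemidef (ψ : ι → ℂ) : (outerProj ψ).PosSemidef := by
  refine Matrix.posSemidef_iff_dotProduct_mulVec.mpr ⟨?_, fun x => ?_⟩
  · ext i j
    simp [outerProj, Matrix.conjTranspose_apply, mul_comm]
  · have h : star x ⬝ᵥ (outerProj ψ *ᵥ x) =
        star (∑ j, star (ψ j) * x j) * (∑ j, star (ψ j) * x j) := by
      simp only [dotProduct, Matrix.mulVec, outerProj, Matrix.of_apply, Pi.star_apply,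
        star_sum, star_mul', star_star, starRingEnd_apply, Finset.sum_mul, Finset.mul_sum]
      rw [Finset.sum_comm]
      refine Finset.sum_congr rfl fun i _ => Finset.sum_congr rfl fun j _ => ?_
      ring
    rw [h]
    exact star_mul_self_nonneg _

variable [DecidableEq ι]

variable (ι) in
def maxEntangled : ι × ι → ℂ :=
  fun p => if p.1 = p.2 then (Real.sqrt (Fintype.card ι) : ℂ)⁻¹ else 0

omit [DecidableEq ι] in
lemma sqrt_card_inv_mul_self :
    (Real.sqrt (Fintype.card ι) : ℂ)⁻¹ * (Real.sqrt (Fintype.card ι) : ℂ)⁻¹ =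
      (Fintype.card ι : ℂ)⁻¹ := by
  rw [← mul_inv, ← Complex.ofReal_mul, Real.mul_self_sqrt (Nat.cast_nonneg _)]
  push_cast; rfl

lemma trace_outerProj_maxEntangled [Nonempty ι] :
    (outerProj (maxEntangled ι)).trace = 1 := by
  simp [Matrix.trace, outerProj, maxEntangled, Fintype.sum_prod_type, sqrt_card_inv_mul_self]

lemma trace_kronecker_mul_outerProj_maxEntangled (A B : Matrix ι ι ℂ) :
    ((A ⊗ₖ B) * outerProj (maxEntangled ι)).trace = (A * Bᵀ).trace / Fintype.card ι := by
  simp [Matrix.trace, Matrix.mul_apply, outerProj, maxEntangled, Fintype.sum_prod_type,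
    apply_ite, sqrt_card_inv_mul_self]
  simp only [div_eq_mul_inv, Finset.sum_mul]

end Bell

def qubitEffect (a b : ℝ) (u : ℂ) : Matrix (Fin 2) (Fin 2) ℂ :=
  !![(a : ℂ), b * star u; b * u, a]

section QubitEffect

variable (a b : ℝ) (u : ℂ)

lemma qubitEffect_eq_add_outerProj (c₁ c₂ : ℝ) (hu : ‖u‖ = 1) :
    qubitEffect (c₁ ^ 2 + c₂ ^ 2) (c₁ ^ 2 - c₂ ^ 2) u =
      outerProj ((c₁ : ℂ) • ![1, u]) + outerProj ((c₂ : ℂ) • ![1, -u]) := by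
  have hu' : u * starRingEnd ℂ u = 1 := by
    rw [Complex.mul_conj, Complex.normSq_eq_norm_sq, hu]; norm_num
  ext i j
  fin_cases i <;> fin_cases j <;>
    simp [qubitEffect, outerProj, RCLike.star_def] <;> ring_nf
  linear_combination (-((c₁ : ℂ) ^ 2 + (c₂ : ℂ) ^ 2)) * hu'

lemma qubitEffect_posSemidef (hab : |b| ≤ a) (hu : ‖u‖ = 1) :
    (qubitEffect a b u).PosSemidef := by
  obtain ⟨c₁, hc₁⟩ : ∃ c : ℝ, c ^ 2 = (a + b) / 2 :=
    ⟨_, Real.sq_sqrt (by linarith [neg_abs_le b])⟩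
  obtain ⟨c₂, hc₂⟩ : ∃ c : ℝ, c ^ 2 = (a - b) / 2 :=
    ⟨_, Real.sq_sqrt (by linarith [le_abs_self b])⟩
  have hqe := qubitEffect_eq_add_outerProj u c₁ c₂ hu
  rw [hc₁, hc₂, show (a + b) / 2 + (a - b) / 2 = a by ring,
    show (a + b) / 2 - (a - b) / 2 = b by ring] at hqe
  rw [hqe]
  exact (outerProj_posSemidef _).add (outerProj_posSemidef _)

lemma noisyEffect_qubitEffect (lam : ℝ) :
    noisyEffect lam (qubitEffect a b u) = qubitEffect a ((1 - lam) * b) u := by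
  ext i j
  fin_cases i <;> fin_cases j <;>
    simp [noisyEffect, qubitEffect, Matrix.trace, Fin.sum_univ_two] <;> ring

lemma sum_qubitEffect {ι : Type*} (s : Finset ι) (v : ι → ℂ) :
    ∑ i ∈ s, qubitEffect a b (v i) = qubitEffect (#s * a) b (∑ i ∈ s, v i) := by
  ext i j
  fin_cases i <;> fin_cases j <;>
    simp [qubitEffect, Matrix.sum_apply, Finset.mul_sum, star_sum]

lemma qubitEffect_one_zero : qubitEffect 1 b 0 = 1 := by
  ext i j
  fin_cases i <;> fin_cases j <;> simp [qubitEffect]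

lemma trace_qubitEffect_mul_transpose (a' b' : ℝ) (v : ℂ) :
    (qubitEffect a b u * (qubitEffect a' b' v)ᵀ).trace =
      ((2 * a * a' + 2 * b * b' * (u * v).re : ℝ) : ℂ) := by
  have hre : u * v + starRingEnd ℂ u * starRingEnd ℂ v = 2 * ((u * v).re : ℂ) := by
    rw [← map_mul, Complex.add_conj]
    push_cast
    ring
  simp only [qubitEffect, Matrix.trace_fin_two, Matrix.mul_apply, Fin.sum_univ_two,
    Matrix.transpose_apply, Matrix.of_apply, Matrix.cons_val', Matrix.cons_val_zero,
    Matrix.cons_val_one, Matrix.empty_val', Matrix.cons_val_fin_one, RCLike.star_def]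
  push_cast
  linear_combination (b : ℂ) * b' * hre

end QubitEffect

def unitRoot (m : ℕ) (x : Fin m) : ℂ := Complex.exp ((2 * Real.pi * x / m : ℝ) * Complex.I)

section UnitRoot

variable {m : ℕ}

lemma norm_unitRoot (x : Fin m) : ‖unitRoot m x‖ = 1 := Complex.norm_exp_ofReal_mul_I _

lemma sum_unitRoot (hm : 1 < m) : ∑ x, unitRoot m x = 0 := by
  have hζ := Complex.isPrimitiveRoot_exp m (by omega)
  rw [← hζ.geom_sum_eq_zero hm, ← Fin.sum_univ_eq_sum_range]
  refine Finset.sum_congr rfl fun x _ => ?_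
  rw [unitRoot, ← Complex.exp_nat_mul]
  push_cast
  ring_nf

lemma re_unitRoot_mul (x y : Fin m) :
    (unitRoot m x * unitRoot m y).re = Real.cos (2 * Real.pi * ((x : ℝ) + y) / m) := by
  rw [unitRoot, unitRoot, ← Complex.exp_add, ← add_mul, ← Complex.ofReal_add,
    Complex.exp_ofReal_mul_I_re]
  ring_nf

end UnitRoot

lemma Bmat_apply (m : ℕ) (k : ℝ) (x y : Fin m) :
    Bmat m k x y = 1 / (m : ℝ) ^ 2 * (1 - k * (unitRoot m x * unitRoot m y).re) := by
  rw [re_unitRoot_mul, Bmat, Matrix.of_apply]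

lemma Bmat_row_sum {m : ℕ} (hm : 1 < m) (k : ℝ) (x : Fin m) :
    ∑ y, Bmat m k x y = 1 / m := by
  have hcos : ∑ y, (unitRoot m x * unitRoot m y).re = 0 := by
    rw [← Complex.re_sum, ← Finset.mul_sum, sum_unitRoot hm, mul_zero, Complex.zero_re]
  have hm0 : (m : ℝ) ≠ 0 := by positivity
  simp only [Bmat_apply, ← Finset.mul_sum, Finset.sum_sub_distrib, hcos, mul_zero,
    Finset.sum_const, Finset.card_univ, Fintype.card_fin, nsmul_eq_mul, mul_one, sub_zero]
  field_simp

lemma isPOVM_qubitEffect_unitRoot {m : ℕ} (hm : 1 < m) {b : ℝ} (hb : |b| ≤ 1 / m) :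
    IsPOVM fun x : Fin m => qubitEffect (1 / m) b (unitRoot m x) := by
  refine ⟨fun x => qubitEffect_posSemidef _ _ _ hb (norm_unitRoot x), ?_⟩
  have hm0 : (m : ℝ) ≠ 0 := by positivity
  rw [sum_qubitEffect, sum_unitRoot hm, Finset.card_univ, Fintype.card_fin,
    mul_one_div_cancel hm0, qubitEffect_one_zero]

theorem Bmat_generatesWithNoise_two {k : ℝ} (hk : 0 < k) {m : ℕ} (hm : 1 < m) {lam : ℝ}
    (hlam : lam ≤ 1 - Real.sqrt k) : GeneratesWithNoise (Bmat m k) lam 2 := by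
  have hsqrt : 0 < Real.sqrt k := Real.sqrt_pos.mpr hk
  have hlam1 : 0 < 1 - lam := by linarith
  have hm0 : (0 : ℝ) < m := by positivity
  set b := Real.sqrt k / (1 - lam) / m with hb_def
  have hb : |b| ≤ 1 / m := by
    rw [abs_of_nonneg (by positivity)]
    exact div_le_div_of_nonneg_right ((div_le_one hlam1).mpr (by linarith)) hm0.le
  have hnoisy : ((1 - lam) * b) ^ 2 = k / m ^ 2 := by
    rw [hb_def, mul_div_assoc', mul_div_cancel₀ _ hlam1.ne', div_pow, Real.sq_sqrt hk.le]
  refine ⟨outerProj (maxEntangled (Fin 2)),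
    fun x => qubitEffect (1 / m) b (unitRoot m x), fun y => qubitEffect (1 / m) (-b) (unitRoot m y),
    outerProj_posSemidef _, trace_outerProj_maxEntangled, isPOVM_qubitEffect_unitRoot hm hb,
    isPOVM_qubitEffect_unitRoot hm (by rwa [abs_neg]), fun x y => ?_⟩
  rw [trace_kronecker_mul_outerProj_maxEntangled, noisyEffect_qubitEffect, noisyEffect_qubitEffect,
    trace_qubitEffect_mul_transpose, Bmat_apply, Fintype.card_fin]
  have hnoisyC := congrArg Complex.ofReal hnoisy
  push_cast at hnoisyC ⊢
  linear_combination ((unitRoot m x * unitRoot m y).re : ℂ) * hnoisyC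

lemma GeneratesWithNoise.exists_rank_one {n : ℕ} {P : Matrix (Fin n) (Fin n) ℝ} {lam : ℝ}
    (h : GeneratesWithNoise P lam 1) : ∃ e f : Fin n → ℂ, ∀ x y, (P x y : ℂ) = e x * f y := by
  obtain ⟨σ, E, F, -, hσ, -, -, hP⟩ := h
  have hσ00 : σ (0, 0) (0, 0) = 1 := by
    simpa [Matrix.trace, Fintype.sum_prod_type] using hσ
  refine ⟨fun x => E x 0 0, fun y => F y 0 0, fun x y => ?_⟩
  rw [hP]
  simp [Matrix.trace, Matrix.mul_apply, Fintype.sum_prod_type, noisyEffect, hσ00]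
  ring

lemma rows_eq_of_rank_one_of_row_sum_eq {α β : Type*} [Fintype β] {P : Matrix α β ℝ}
    {e : α → ℂ} {f : β → ℂ} (hP : ∀ x y, (P x y : ℂ) = e x * f y) {c : ℝ} (hc : c ≠ 0)
    (hrow : ∀ x, ∑ y, P x y = c) (x x' : α) (y : β) : P x y = P x' y := by
  have hsum : ∀ x, e x * ∑ y, f y = c := fun x => by
    rw [Finset.mul_sum, ← hrow x, Complex.ofReal_sum]
    exact Finset.sum_congr rfl fun y _ => (hP x y).symm
  have hf : ∑ y, f y ≠ 0 := fun h0 => hc <| by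
    have h := hsum x
    rw [h0, mul_zero] at h
    exact_mod_cast h.symm
  have he : e x = e x' := mul_right_cancel₀ hf ((hsum x).trans (hsum x').symm)
  exact_mod_cast (hP x y).trans (he ▸ (hP x' y).symm)

lemma Bmat_zero_zero_ne_one_zero {k : ℝ} (hk : k ≠ 0) {m : ℕ} (hm : 1 < m) :
    Bmat m k ⟨0, by omega⟩ ⟨0, by omega⟩ ≠ Bmat m k ⟨1, hm⟩ ⟨0, by omega⟩ := by
  have hm0 : (1 : ℝ) < m := by exact_mod_cast hm
  have hangle : 0 < 2 * Real.pi / m := by positivity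
  have hcos : Real.cos (2 * Real.pi / m) ≠ 1 := by
    rw [Ne, Real.cos_eq_one_iff_of_lt_of_lt (by linarith [Real.pi_pos])
      ((div_lt_iff₀ (by positivity)).mpr (by nlinarith [Real.pi_pos]))]
    exact hangle.ne'
  simp only [Bmat, Matrix.of_apply, Nat.cast_zero, Nat.cast_one, add_zero, mul_zero,
    zero_div, Real.cos_zero, mul_one, Ne, mul_right_inj' (by positivity : 1 / (m : ℝ) ^ 2 ≠ 0)]
  intro h
  exact hcos (mul_left_cancel₀ hk (by linarith)).symm

theorem not_Bmat_generatesWithNoise_one {k : ℝ} (hk : k ≠ 0) {m : ℕ} (hm : 1 < m) (lam : ℝ) :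
    ¬ GeneratesWithNoise (Bmat m k) lam 1 := fun h => by
  obtain ⟨e, f, hP⟩ := h.exists_rank_one
  exact Bmat_zero_zero_ne_one_zero hk hm <| rows_eq_of_rank_one_of_row_sum_eq hP
    (one_div_ne_zero (by positivity)) (Bmat_row_sum hm k) _ _ _

theorem Bmat_cost_eq_two_below_threshold_general
    (k : ℝ) (hk0 : 0 < k) (m : ℕ) (hm : 2 ≤ m)
    (lam : ℝ) (hlam1 : lam ≤ 1 - Real.sqrt k) :
    GeneratesWithNoise (Bmat m k) lam 2 ∧ ¬ GeneratesWithNoise (Bmat m k) lam 1 :=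
  ⟨Bmat_generatesWithNoise_two hk0 hm hlam1, not_Bmat_generatesWithNoise_one hk0.ne' hm lam⟩

/-- for every λ ∈ [0, 1 − √k], the minimal local dimension of a noisy
quantum protocol generating B_m equals 2: local dimension 2 suffices, while local
dimension 1 does not. -/
theorem Bmat_cost_eq_two_below_threshold
    (k : ℝ) (hk0 : 0 < k) (hk1 : k < 1) (m : ℕ) (hm : 2 ≤ m)
    (lam : ℝ) (hlam0 : 0 ≤ lam) (hlam1 : lam ≤ 1 - Real.sqrt k) :
    GeneratesWithNoise (Bmat m k) lam 2 ∧ ¬ GeneratesWithNoise (Bmat m k) lam 1 :=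
  Bmat_cost_eq_two_below_threshold_general k hk0 m hm lam hlam1

end
end

section
/- Let m ≥ 3 be an integer and k ∈ (0,1) with k > cos(2π/m)/cos²(π/m). Then the nonnegative rank of the m×m correlation B_m satisfies rank_+(B_m) > log₂(m/2). -/
open Matrix BigOperators Finset
open scoped Kronecker ComplexOrder

noncomputable section

/-!
Take a nonnegative factorization `B_m = ∑_{i < r} u_i v_iᵀ` and drop the rows `u_i = 0`. With
`θ_x = 2πx/m`, column `y` of `m² B_m` is `x ↦ 1 - k cos (θ_x + θ_y) = 1 + ⟪z_y, e^{iθ_x}⟫` with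
`z_y = -k e^{-iθ_y}`, a nonnegative combination of the `u_i`. Let `K` be the set of pairs `(w, z)`,
`w ≥ 0`, with `∑ w_i u_i(x) = 1 + ⟪z, e^{iθ_x}⟫` on the grid. Nonnegativity at the grid point
nearest to `-z` gives `‖z‖ ≤ 1 / cos (π/m)`, so `K` is compact. For each direction `ψ` pick a
maximiser `g ψ ∈ K` of `⟪z, e^{iψ}⟫`; the columns show that the maximum is at least `k cos (π/m)`.
If `g ψ` and `g ψ'` have the same support, `g ψ' + t (g ψ' - g ψ)` stays in `K` for small `t > 0`,
so `g ψ` is a maximiser for `ψ'` as well, and Cauchy–Schwarz gives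
`k cos² (π/m) ≤ cos (d(ψ, ψ') / 2)`, where `d` is the distance on the circle. The hypothesis on `k`
turns this into `d(ψ, ψ') < 4π/m`, so each of the `2^r` supports covers a set of measure
`< 4π/m`; hence `2^r > m/2`. For `m < 8` it suffices that `r ≥ 2`, which follows from a
nonvanishing `2 × 2` minor of `B_m`.
-/

open Real MeasureTheory
open scoped RealInnerProductSpace ComplexConjugate

lemma exists_cos_le_neg_cos_pi_div {m : ℕ} (hm : m ≠ 0) (ω : ℝ) :
    ∃ x : Fin m, cos (2 * π * x / m + ω) ≤ -cos (π / m) := by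
  have hm0 : (0 : ℝ) < m := by positivity
  set t := (π - ω) * m / (2 * π)
  set n : ℤ := round t
  have hclose : |2 * π * n / m + ω - π| ≤ π / m := by
    have h : 2 * π * n / m + ω - π = 2 * π / m * (n - t) := by
      simp only [t]; field_simp; ring
    rw [h, abs_mul, abs_of_pos (by positivity), abs_sub_comm]
    calc 2 * π / m * |t - n| ≤ 2 * π / m * (1 / 2) := by gcongr; exact abs_sub_round t
      _ = π / m := by ring
  have hmz : (0 : ℤ) < m := by omega
  have hlt : n % m < m := Int.emod_lt_of_pos n hmz
  refine ⟨⟨(n % m).toNat, by omega⟩, ?_⟩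
  have hx : (((n % m).toNat : ℕ) : ℝ) = n - (n / m : ℤ) * m := by
    rw [← Int.cast_natCast, Int.toNat_of_nonneg (Int.emod_nonneg n hmz.ne'), Int.emod_def]
    push_cast; ring
  have hper : 2 * π * (((n % m).toNat : ℕ) : ℝ) / m + ω
      = 2 * π * n / m + ω - (n / m : ℤ) * (2 * π) := by
    rw [hx]; field_simp; ring
  rw [hper, cos_sub_int_mul_two_pi, ← neg_neg (cos (2 * π * n / m + ω)), ← cos_sub_pi,
    neg_le_neg_iff, ← cos_abs (_ - π)]
  exact cos_le_cos_of_nonneg_of_le_pi (abs_nonneg _)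
    (div_le_self pi_pos.le (by exact_mod_cast Nat.one_le_iff_ne_zero.mpr hm)) hclose

lemma cos_pi_div_pos {m : ℕ} (hm : 2 < m) : 0 < cos (π / m) := by
  have hm' : (2 : ℝ) < m := by exact_mod_cast hm
  refine cos_pos_of_mem_Ioo ⟨by linarith [pi_pos, div_pos pi_pos (by linarith : (0 : ℝ) < m)], ?_⟩
  rw [div_lt_div_iff₀ (by linarith) two_pos]
  nlinarith [pi_pos]

lemma arccos_mul_cos_sq_lt {m : ℕ} (hm : 2 < m) {k : ℝ} (hk1 : k ≤ 1)
    (hkl : cos (2 * π / m) / cos (π / m) ^ 2 < k) : arccos (k * cos (π / m) ^ 2) < 2 * π / m := by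
  have hm' : (2 : ℝ) < m := by exact_mod_cast hm
  have hcos := cos_pi_div_pos hm
  calc arccos (k * cos (π / m) ^ 2) < arccos (cos (2 * π / m)) :=
        arccos_lt_arccos (neg_one_le_cos _) ((div_lt_iff₀ (by positivity)).1 hkl)
          (mul_le_one₀ hk1 (by positivity) (pow_le_one₀ hcos.le (cos_le_one _)))
    _ = 2 * π / m :=
        arccos_cos (by positivity) (by rw [div_le_iff₀ (by linarith)]; nlinarith [pi_pos])

def gridPoint (m : ℕ) (x : Fin m) : ℂ := Complex.exp ((2 * π * x / m : ℝ) * Complex.I)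

lemma norm_gridPoint {m : ℕ} (x : Fin m) : ‖gridPoint m x‖ = 1 :=
  Complex.norm_exp_ofReal_mul_I _

lemma inner_exp_ofReal_mul_I (z : ℂ) (ψ : ℝ) :
    ⟪z, Complex.exp (ψ * Complex.I)⟫ = ‖z‖ * cos (ψ - Complex.arg z) := by
  rw [Complex.inner, cos_sub, Complex.mul_re, Complex.exp_ofReal_mul_I_re,
    Complex.exp_ofReal_mul_I_im, Complex.conj_re, Complex.conj_im, ← Complex.norm_mul_cos_arg,
    ← Complex.norm_mul_sin_arg]
  ring

lemma exists_inner_gridPoint_le {m : ℕ} (hm : m ≠ 0) (z : ℂ) :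
    ∃ x : Fin m, ⟪z, gridPoint m x⟫ ≤ -(‖z‖ * cos (π / m)) := by
  obtain ⟨x, hx⟩ := exists_cos_le_neg_cos_pi_div hm (-Complex.arg z)
  refine ⟨x, ?_⟩
  rw [gridPoint, inner_exp_ofReal_mul_I, ← mul_neg]
  exact mul_le_mul_of_nonneg_left (by rwa [sub_eq_add_neg]) (norm_nonneg z)

lemma inner_neg_mul_conj_gridPoint {m : ℕ} (k ψ : ℝ) (y : Fin m) :
    ⟪-((k : ℂ) * conj (gridPoint m y)), Complex.exp (ψ * Complex.I)⟫
      = -(k * cos (2 * π * y / m + ψ)) := by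
  rw [Complex.inner, map_neg, map_mul, Complex.conj_ofReal, Complex.conj_conj, gridPoint,
    mul_neg, mul_left_comm, ← Complex.exp_add, ← add_mul, ← Complex.ofReal_add, Complex.neg_re,
    Complex.re_ofReal_mul, Complex.exp_ofReal_mul_I_re, add_comm ψ]

lemma AddCircle.norm_le_pi (θ : AddCircle (2 * π)) : ‖θ‖ ≤ π := by
  have := AddCircle.norm_le_half_period (2 * π) (x := θ) two_pi_pos.ne'
  rwa [abs_of_pos two_pi_pos, mul_div_cancel_left₀ _ two_ne_zero] at this

lemma dist_le_two_mul_arccos {θ θ' : AddCircle (2 * π)} {c : ℝ}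
    (h : c ≤ cos (dist θ θ' / 2)) : dist θ θ' ≤ 2 * arccos c := by
  have hπ : dist θ θ' ≤ π := dist_eq_norm θ θ' ▸ AddCircle.norm_le_pi _
  calc dist θ θ' = 2 * arccos (cos (dist θ θ' / 2)) := by
        rw [arccos_cos (by positivity) (by linarith [dist_nonneg (x := θ) (y := θ')])]; ring
    _ ≤ 2 * arccos c := mul_le_mul_of_nonneg_left (arccos_le_arccos h) two_pos.le

lemma cos_norm_coe_addCircle_two_pi (x : ℝ) : cos ‖(x : AddCircle (2 * π))‖ = cos x := by
  rw [AddCircle.norm_eq, cos_abs, cos_sub_int_mul_two_pi]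

lemma norm_exp_add_exp (ψ ψ' : ℝ) :
    ‖Complex.exp (ψ * Complex.I) + Complex.exp (ψ' * Complex.I)‖
      = 2 * cos (‖((ψ - ψ' : ℝ) : AddCircle (2 * π))‖ / 2) := by
  set D := ‖((ψ - ψ' : ℝ) : AddCircle (2 * π))‖
  have hcos : 0 ≤ cos (D / 2) := cos_nonneg_of_mem_Icc
    ⟨by linarith [pi_pos, norm_nonneg ((ψ - ψ' : ℝ) : AddCircle (2 * π))],
      by linarith [AddCircle.norm_le_pi ((ψ - ψ' : ℝ) : AddCircle (2 * π))]⟩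
  refine (sq_eq_sq₀ (norm_nonneg _) (by positivity)).1 ?_
  rw [Complex.sq_norm, Complex.normSq_add, Complex.normSq_eq_norm_sq, Complex.normSq_eq_norm_sq,
    Complex.norm_exp_ofReal_mul_I, Complex.norm_exp_ofReal_mul_I, Complex.mul_re,
    Complex.conj_re, Complex.conj_im, Complex.exp_ofReal_mul_I_re, Complex.exp_ofReal_mul_I_re,
    Complex.exp_ofReal_mul_I_im, Complex.exp_ofReal_mul_I_im, mul_pow, cos_sq,
    mul_div_cancel₀ _ two_ne_zero, cos_norm_coe_addCircle_two_pi, cos_sub]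
  ring

namespace AddCircle

variable {T : ℝ} [hT : Fact (0 < T)]

lemma exists_subset_closedBall_of_forall_dist_le {s : Set (AddCircle T)} {δ : ℝ}
    (hδ : 4 * δ ≤ T) (hs : ∀ x ∈ s, ∀ y ∈ s, dist x y ≤ δ) :
    ∃ c, s ⊆ Metric.closedBall c (δ / 2) := by
  rcases s.eq_empty_or_nonempty with rfl | ⟨a, ha⟩
  · exact ⟨0, Set.empty_subset _⟩
  obtain ⟨a₀, rfl⟩ := QuotientAddGroup.mk_surjective a
  have hT2 : |T| / 2 = T / 2 := by rw [abs_of_pos hT.out]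
  have hdist : ∀ d d' : ℝ, dist ((a₀ + d : ℝ) : AddCircle T) ((a₀ + d' : ℝ) : AddCircle T)
      = ‖((d - d' : ℝ) : AddCircle T)‖ := fun d d' => by
    rw [dist_eq_norm, ← coe_sub, add_sub_add_left_eq_sub]
  -- As `4 δ ≤ T`, the lifts of the points of `s` nearest to `a₀` are pairwise `δ`-close in `ℝ`,
  -- so they lie in an interval of length `δ`.
  set D := {d : ℝ | |d| ≤ T / 2 ∧ ((a₀ + d : ℝ) : AddCircle T) ∈ s}
  have hlift : ∀ x ∈ s, ∃ d ∈ D, ((a₀ + d : ℝ) : AddCircle T) = x := by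
    intro x hx
    obtain ⟨y, hy, rfl⟩ := (coe_image_Ioc_eq (p := T) (a₀ - T / 2)).symm ▸ Set.mem_univ x
    refine ⟨y - a₀, ⟨?_, by rwa [add_sub_cancel]⟩, by rw [add_sub_cancel]⟩
    rw [abs_le]; constructor <;> linarith [hy.1, hy.2]
  have hnear : ∀ d ∈ D, |d| ≤ δ := fun d hd => by
    have := hs _ hd.2 _ (show ((a₀ + 0 : ℝ) : AddCircle T) ∈ s by rwa [add_zero])
    rwa [hdist, sub_zero, (norm_coe_eq_abs_iff T hT.out.ne').2 (hT2 ▸ hd.1)] at this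
  have hpair : ∀ d ∈ D, ∀ d' ∈ D, |d - d'| ≤ δ := by
    intro d hd d' hd'
    rw [← (norm_coe_eq_abs_iff T hT.out.ne').2, ← hdist]
    · exact hs _ hd.2 _ hd'.2
    · linarith [abs_sub d d', hnear d hd, hnear d' hd']
  have hD0 : (0 : ℝ) ∈ D := ⟨by rw [abs_zero]; exact (half_pos hT.out).le, by rwa [add_zero]⟩
  have hbdd : BddBelow D := ⟨-(T / 2), fun d hd => neg_le_of_abs_le hd.1⟩
  set α := sInf D
  refine ⟨((a₀ + (α + δ / 2) : ℝ) : AddCircle T), fun x hx => ?_⟩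
  obtain ⟨d, hd, rfl⟩ := hlift x hx
  have h1 : α ≤ d := csInf_le hbdd hd
  have h2 : d ≤ α + δ := by
    have := le_csInf ⟨0, hD0⟩ fun d' hd' => (by linarith [abs_le.1 (hpair d hd d' hd')] :
      d - δ ≤ d')
    linarith
  rw [Metric.mem_closedBall, hdist]
  refine (QuotientAddGroup.norm_mk_le_norm).trans ?_
  rw [Real.norm_eq_abs, abs_le]
  constructor <;> linarith

lemma volume_le_of_forall_dist_le {s : Set (AddCircle T)} {δ : ℝ} (hδ : 4 * δ ≤ T)
    (hs : ∀ x ∈ s, ∀ y ∈ s, dist x y ≤ δ) : volume s ≤ ENNReal.ofReal δ := by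
  obtain ⟨c, hc⟩ := exists_subset_closedBall_of_forall_dist_le hδ hs
  calc volume s ≤ volume (Metric.closedBall c (δ / 2)) := measure_mono hc
    _ = ENNReal.ofReal (min T (2 * (δ / 2))) := volume_closedBall T _
    _ ≤ ENNReal.ofReal δ := ENNReal.ofReal_le_ofReal (by linarith [min_le_right T (2 * (δ / 2))])

lemma le_card_mul_of_forall_dist_le {β : Type*} [Fintype β] (f : AddCircle T → β) {δ : ℝ}
    (hδ : 4 * δ ≤ T) (hf : ∀ x y, f x = f y → dist x y ≤ δ) :
    T ≤ Fintype.card β * δ := by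
  have hδ0 : 0 ≤ δ := by simpa using hf 0 0 rfl
  refine (ENNReal.ofReal_le_ofReal_iff (by positivity)).1 ?_
  calc ENNReal.ofReal T = volume (Set.univ : Set (AddCircle T)) := (AddCircle.measure_univ T).symm
    _ ≤ volume (⋃ b, f ⁻¹' {b}) := measure_mono fun x _ => Set.mem_iUnion.2 ⟨f x, rfl⟩
    _ ≤ ∑ b, volume (f ⁻¹' {b}) := measure_iUnion_fintype_le _ _
    _ ≤ ∑ _b : β, ENNReal.ofReal δ := Finset.sum_le_sum fun b _ =>
        volume_le_of_forall_dist_le hδ fun x hx y hy => hf x y (hx.trans hy.symm)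
    _ = ENNReal.ofReal (Fintype.card β * δ) := by
        rw [Finset.sum_const, Finset.card_univ, nsmul_eq_mul, ENNReal.ofReal_mul (by positivity),
          ENNReal.ofReal_natCast]

end AddCircle

open Filter Topology in
lemma exists_pos_nonneg_add_smul_sub {ι : Type*} [Finite ι] {w w' : ι → ℝ} (hw' : 0 ≤ w')
    (hsupp : ∀ i, w' i = 0 → w i = 0) : ∃ t : ℝ, 0 < t ∧ 0 ≤ w' + t • (w' - w) := by
  have h : ∀ i, ∀ᶠ t in 𝓝[>] (0 : ℝ), 0 ≤ w' i + t * (w' i - w i) := by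
    intro i
    rcases (hw' i).eq_or_lt with h | h
    · simp [← h, hsupp i h.symm]
    · have : Tendsto (fun t : ℝ => w' i + t * (w' i - w i)) (𝓝 0) (𝓝 (w' i)) :=
        (continuous_const.add (continuous_id.mul continuous_const)).tendsto' _ _ (by simp)
      exact nhdsWithin_le_nhds ((this.eventually (lt_mem_nhds h)).mono fun _ => le_of_lt)
  obtain ⟨t, ht, ht0⟩ := ((eventually_all.2 h).and self_mem_nhdsWithin).exists
  exact ⟨t, ht0, fun i => by simpa using ht i⟩

section trigReps

variable {ι : Type*} [Fintype ι] {m : ℕ}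

-- The set `K` of the proof sketch: representations of `x ↦ 1 + ⟪z, e^{iθ_x}⟫` on the grid as
-- nonnegative combinations `∑ w_i u_i`.
def trigReps (u : ι → Fin m → ℝ) : Set ((ι → ℝ) × ℂ) :=
  {p | 0 ≤ p.1 ∧ ∀ x, ∑ i, p.1 i * u i x = 1 + ⟪p.2, gridPoint m x⟫}

variable {u : ι → Fin m → ℝ}

lemma norm_mul_cos_le_one_of_mem_trigReps (hm : m ≠ 0) (hu : 0 ≤ u) {p : (ι → ℝ) × ℂ}
    (hp : p ∈ trigReps u) : ‖p.2‖ * cos (π / m) ≤ 1 := by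
  obtain ⟨x, hx⟩ := exists_inner_gridPoint_le hm p.2
  have := hp.2 x ▸ Finset.sum_nonneg fun i _ => mul_nonneg (hp.1 i) (hu i x)
  linarith

lemma isClosed_trigReps (u : ι → Fin m → ℝ) : IsClosed (trigReps u) := by
  simp only [trigReps, Set.ofPred_and, Set.ofPred_forall]
  exact (isClosed_le continuous_const continuous_fst).inter
    (isClosed_iInter fun x => isClosed_eq (by fun_prop) (by fun_prop))

lemma isCompact_trigReps (hm : 2 < m) (hu : 0 ≤ u) (hlive : ∀ i, u i ≠ 0) :
    IsCompact (trigReps u) := by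
  have hcos := cos_pi_div_pos hm
  set R := 1 / cos (π / m)
  have hnorm : ∀ p ∈ trigReps u, ‖p.2‖ ≤ R := fun p hp => by
    rw [le_div_iff₀ hcos]; exact norm_mul_cos_le_one_of_mem_trigReps (by omega) hu hp
  choose x hx using fun i => Function.ne_iff.mp (hlive i)
  have hsub : trigReps u ⊆ Set.Icc 0 (fun i => (1 + R) / u i (x i)) ×ˢ Metric.closedBall 0 R := by
    intro p hp
    refine ⟨⟨hp.1, fun i => ?_⟩, mem_closedBall_zero_iff.mpr (hnorm p hp)⟩
    have hpos : 0 < u i (x i) := (hu i (x i)).lt_of_ne' (hx i)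
    rw [le_div_iff₀ hpos]
    calc p.1 i * u i (x i) ≤ ∑ j, p.1 j * u j (x i) :=
          Finset.single_le_sum (fun j _ => mul_nonneg (hp.1 j) (hu j (x i))) (Finset.mem_univ i)
      _ = 1 + ⟪p.2, gridPoint m (x i)⟫ := hp.2 (x i)
      _ ≤ 1 + ‖p.2‖ * ‖gridPoint m (x i)‖ := by gcongr; exact real_inner_le_norm _ _
      _ ≤ 1 + R := by rw [norm_gridPoint, mul_one]; gcongr; exact hnorm p hp
  exact Metric.isCompact_of_isClosed_isBounded (isClosed_trigReps u)
    ((Metric.isBounded_Icc _ _).prod Metric.isBounded_closedBall |>.subset hsub)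

lemma add_smul_sub_mem_trigReps {p p' : (ι → ℝ) × ℂ} (hp : p ∈ trigReps u)
    (hp' : p' ∈ trigReps u) {t : ℝ} (ht : 0 ≤ p'.1 + t • (p'.1 - p.1)) :
    p' + t • (p' - p) ∈ trigReps u := by
  refine ⟨ht, fun x => ?_⟩
  have hsum : ∑ i, (p'.1 + t • (p'.1 - p.1)) i * u i x
      = (1 + t) * ∑ i, p'.1 i * u i x - t * ∑ i, p.1 i * u i x := by
    rw [Finset.mul_sum, Finset.mul_sum, ← Finset.sum_sub_distrib]
    refine Finset.sum_congr rfl fun i _ => ?_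
    simp only [Pi.add_apply, Pi.smul_apply, Pi.sub_apply, smul_eq_mul]
    ring
  rw [Prod.fst_add, Prod.smul_fst, Prod.fst_sub, hsum, hp.2 x, hp'.2 x, Prod.snd_add,
    Prod.smul_snd, Prod.snd_sub, inner_add_left, real_inner_smul_left, inner_sub_left]
  ring

lemma isMaxOn_of_support_subset {c : ℂ} {p p' : (ι → ℝ) × ℂ} (hp : p ∈ trigReps u)
    (hp' : p' ∈ trigReps u) (hmax : IsMaxOn (fun q => ⟪q.2, c⟫) (trigReps u) p')
    (hsupp : ∀ i, p'.1 i = 0 → p.1 i = 0) : IsMaxOn (fun q => ⟪q.2, c⟫) (trigReps u) p := by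
  obtain ⟨t, ht, hnn⟩ := exists_pos_nonneg_add_smul_sub hp'.1 hsupp
  have hbeyond : ⟪p'.2 + t • (p'.2 - p.2), c⟫ ≤ ⟪p'.2, c⟫ :=
    isMaxOn_iff.1 hmax _ (add_smul_sub_mem_trigReps hp hp' hnn)
  rw [inner_add_left, real_inner_smul_left, inner_sub_left] at hbeyond
  intro q hq
  have : ⟪q.2, c⟫ ≤ ⟪p'.2, c⟫ := isMaxOn_iff.1 hmax q hq
  show ⟪q.2, c⟫ ≤ ⟪p.2, c⟫
  nlinarith

lemma two_mul_mul_cos_le_norm_add (hm : 2 < m) (hu : 0 ≤ u) {p : (ι → ℝ) × ℂ}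
    (hp : p ∈ trigReps u) {a b : ℂ} {d : ℝ} (ha : d ≤ ⟪p.2, a⟫) (hb : d ≤ ⟪p.2, b⟫) :
    2 * d * cos (π / m) ≤ ‖a + b‖ := by
  have hcos := cos_pi_div_pos hm
  calc 2 * d * cos (π / m) ≤ ⟪p.2, a + b⟫ * cos (π / m) := by
        rw [inner_add_right]; gcongr; linarith
    _ ≤ ‖p.2‖ * ‖a + b‖ * cos (π / m) := by gcongr; exact real_inner_le_norm _ _
    _ = ‖p.2‖ * cos (π / m) * ‖a + b‖ := by ring
    _ ≤ ‖a + b‖ :=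
        mul_le_of_le_one_left (norm_nonneg _) (norm_mul_cos_le_one_of_mem_trigReps (by omega) hu hp)

lemma exists_mem_trigReps_le_inner (hm : m ≠ 0) {k : ℝ} (hk : 0 ≤ k)
    (hcol : ∀ y, ∃ w, (w, -((k : ℂ) * conj (gridPoint m y))) ∈ trigReps u) (ψ : ℝ) :
    ∃ q ∈ trigReps u, k * cos (π / m) ≤ ⟪q.2, Complex.exp (ψ * Complex.I)⟫ := by
  obtain ⟨y, hy⟩ := exists_cos_le_neg_cos_pi_div hm ψ
  obtain ⟨w, hw⟩ := hcol y
  refine ⟨_, hw, ?_⟩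
  rw [inner_neg_mul_conj_gridPoint]
  nlinarith

lemma mem_trigReps_comp {κ : Type*} [Fintype κ] {e : κ → ι} (he : Function.Injective e)
    (hzero : ∀ i ∉ Set.range e, u i = 0) {p : (ι → ℝ) × ℂ} (hp : p ∈ trigReps u) :
    (p.1 ∘ e, p.2) ∈ trigReps (u ∘ e) := by
  refine ⟨fun j => hp.1 (e j), fun x => ?_⟩
  rw [← hp.2 x]
  exact Fintype.sum_of_injective e he _ _ (fun i hi => by simp [hzero i hi]) fun _ => rfl

lemma mul_cos_sq_le_cos_half_norm (hm : 2 < m) {k : ℝ} (hk : 0 ≤ k) (hu : 0 ≤ u)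
    (hcol : ∀ y, ∃ w, (w, -((k : ℂ) * conj (gridPoint m y))) ∈ trigReps u)
    {p : (ι → ℝ) × ℂ} (hp : p ∈ trigReps u) {ψ ψ' : ℝ}
    (hmax : IsMaxOn (fun q => ⟪q.2, Complex.exp (ψ * Complex.I)⟫) (trigReps u) p)
    (hmax' : IsMaxOn (fun q => ⟪q.2, Complex.exp (ψ' * Complex.I)⟫) (trigReps u) p) :
    k * cos (π / m) ^ 2 ≤ cos (‖((ψ - ψ' : ℝ) : AddCircle (2 * π))‖ / 2) := by
  obtain ⟨q, hq, hqψ⟩ := exists_mem_trigReps_le_inner (by omega) hk hcol ψ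
  obtain ⟨q', hq', hqψ'⟩ := exists_mem_trigReps_le_inner (by omega) hk hcol ψ'
  have h := two_mul_mul_cos_le_norm_add hm hu hp (hqψ.trans (hmax hq)) (hqψ'.trans (hmax' hq'))
  rw [norm_exp_add_exp] at h
  linarith [show 2 * (k * cos (π / m)) * cos (π / m) = 2 * (k * cos (π / m) ^ 2) by ring]

theorem half_lt_two_pow_card_of_ne_zero (hm : 8 ≤ m) {k : ℝ} (hk0 : 0 ≤ k) (hk1 : k ≤ 1)
    (hkl : cos (2 * π / m) / cos (π / m) ^ 2 < k) (hu : 0 ≤ u) (hlive : ∀ i, u i ≠ 0)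
    (hcol : ∀ y, ∃ w, (w, -((k : ℂ) * conj (gridPoint m y))) ∈ trigReps u) :
    (m : ℝ) / 2 < 2 ^ Fintype.card ι := by
  classical
  have : Fact (0 < 2 * π) := ⟨two_pi_pos⟩
  have hm2 : 2 < m := by omega
  have hm8 : (8 : ℝ) ≤ m := by exact_mod_cast hm
  set δ := 2 * arccos (k * cos (π / m) ^ 2)
  have hδ : δ < 4 * π / m := by
    linarith [arccos_mul_cos_sq_lt hm2 hk1 hkl, show 4 * π / m = 2 * (2 * π / m) by ring]
  have hδ' : 4 * δ ≤ 2 * π := by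
    have : 4 * π / m ≤ π / 2 := by rw [div_le_iff₀ (by linarith)]; nlinarith [pi_pos]
    linarith
  have hmax : ∀ θ : AddCircle (2 * π), ∃ ψ : ℝ, (ψ : AddCircle (2 * π)) = θ ∧
      ∃ p ∈ trigReps u, IsMaxOn (fun q => ⟪q.2, Complex.exp (ψ * Complex.I)⟫) (trigReps u) p := by
    intro θ
    obtain ⟨ψ, rfl⟩ := QuotientAddGroup.mk_surjective θ
    obtain ⟨q, hq, -⟩ := exists_mem_trigReps_le_inner (by omega) hk0 hcol ψ
    exact ⟨ψ, rfl, (isCompact_trigReps hm2 hu hlive).exists_isMaxOn ⟨q, hq⟩ (by fun_prop)⟩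
  choose ψ hψ g hg hgmax using hmax
  have hclose : ∀ θ θ', Function.support (g θ).1 = Function.support (g θ').1 → dist θ θ' ≤ δ := by
    intro θ θ' hsupp
    have hmax' := isMaxOn_of_support_subset (hg θ) (hg θ') (hgmax θ') fun i hi => by
      rwa [← Function.notMem_support, hsupp, Function.notMem_support]
    have h := mul_cos_sq_le_cos_half_norm hm2 hk0 hu hcol (hg θ) (hgmax θ) hmax'
    rw [AddCircle.coe_sub, hψ, hψ, ← dist_eq_norm] at h
    exact dist_le_two_mul_arccos h
  have hcover := AddCircle.le_card_mul_of_forall_dist_le _ hδ' hclose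
  rw [Fintype.card_set, Nat.cast_pow, Nat.cast_two] at hcover
  have h : 2 * π * m < 2 * π * (2 * 2 ^ Fintype.card ι) := by
    have := hcover.trans_lt (mul_lt_mul_of_pos_left hδ (by positivity))
    rw [← mul_div_assoc, lt_div_iff₀ (by linarith)] at this
    linarith
  linarith [lt_of_mul_lt_mul_left h two_pi_pos.le]

theorem half_lt_two_pow_card (hm : 8 ≤ m) {k : ℝ} (hk0 : 0 ≤ k) (hk1 : k ≤ 1)
    (hkl : cos (2 * π / m) / cos (π / m) ^ 2 < k) (hu : 0 ≤ u)
    (hcol : ∀ y, ∃ w, (w, -((k : ℂ) * conj (gridPoint m y))) ∈ trigReps u) :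
    (m : ℝ) / 2 < 2 ^ Fintype.card ι := by
  classical
  have hzero : ∀ i ∉ Set.range (Subtype.val : {i // u i ≠ 0} → ι), u i = 0 := fun i hi => by
    by_contra h
    exact hi ⟨⟨i, h⟩, rfl⟩
  calc (m : ℝ) / 2 < 2 ^ Fintype.card {i // u i ≠ 0} :=
        half_lt_two_pow_card_of_ne_zero (u := u ∘ Subtype.val) hm hk0 hk1 hkl (fun i => hu i)
          (fun i => i.2) fun y => by
            obtain ⟨w, hw⟩ := hcol y
            exact ⟨w ∘ Subtype.val, mem_trigReps_comp Subtype.val_injective hzero hw⟩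
    _ ≤ 2 ^ Fintype.card ι := pow_le_pow_right₀ one_le_two (Fintype.card_subtype_le _)

end trigReps

lemma two_le_card_of_mul_ne_mul {ι α β : Type*} [Fintype ι] {P : α → β → ℝ} {u : ι → α → ℝ}
    {v : ι → β → ℝ} (hP : ∀ x y, P x y = ∑ i, u i x * v i y) {x x' : α} {y y' : β}
    (h : P x y * P x' y' ≠ P x y' * P x' y) : 2 ≤ Fintype.card ι := by
  by_contra! hcard
  have : Subsingleton ι := Fintype.card_le_one_iff_subsingleton.1 (by omega)
  apply h
  rcases isEmpty_or_nonempty ι with hι | ⟨⟨i⟩⟩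
  · simp [hP]
  · simp only [hP, Fintype.sum_subsingleton _ i]
    ring

lemma exists_nonneg_factorization_nonnegRank {m n : ℕ} {P : Matrix (Fin m) (Fin n) ℝ}
    (hP : ∀ x y, 0 ≤ P x y) :
    ∃ (u : Fin (NonnegRank P) → Fin m → ℝ) (v : Fin (NonnegRank P) → Fin n → ℝ),
      (∀ i x, 0 ≤ u i x) ∧ (∀ i y, 0 ≤ v i y) ∧ ∀ x y, P x y = ∑ i, u i x * v i y :=
  Nat.sInf_mem (s := {r | ∃ (u : Fin r → Fin m → ℝ) (v : Fin r → Fin n → ℝ),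
      (∀ i x, 0 ≤ u i x) ∧ (∀ i y, 0 ≤ v i y) ∧ ∀ x y, P x y = ∑ i, u i x * v i y})
    ⟨m, fun i x => if i = x then 1 else 0, P, fun i x => by dsimp only; split_ifs <;> norm_num, hP,
      fun x y => by simp [ite_mul]⟩

section Bmat

variable {m : ℕ} {k : ℝ}

lemma Bmat_nonneg (hk : |k| ≤ 1) (x y : Fin m) : 0 ≤ Bmat m k x y := by
  have : k * cos (2 * π * ((x : ℝ) + y) / m) ≤ 1 := by
    refine (le_abs_self _).trans ?_
    rw [abs_mul]
    exact mul_le_one₀ hk (abs_nonneg _) (abs_cos_le_one _)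
  exact mul_nonneg (by positivity) (by linarith)

lemma sq_mul_Bmat (hm : m ≠ 0) (x y : Fin m) :
    (m : ℝ) ^ 2 * Bmat m k x y = 1 + ⟪-((k : ℂ) * conj (gridPoint m y)), gridPoint m x⟫ := by
  rw [gridPoint.eq_1 m x, inner_neg_mul_conj_gridPoint,
    show 2 * π * y / m + 2 * π * x / m = 2 * π * ((x : ℝ) + y) / m by ring]
  simp only [Bmat, Matrix.of_apply]
  field_simp
  ring

lemma Bmat_column_mem_trigReps {ι : Type*} [Fintype ι] (hm : m ≠ 0) {u v : ι → Fin m → ℝ}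
    (hv : 0 ≤ v) (hB : ∀ x y, Bmat m k x y = ∑ i, u i x * v i y) (y : Fin m) :
    (fun i => (m : ℝ) ^ 2 * v i y, -((k : ℂ) * conj (gridPoint m y))) ∈ trigReps u := by
  refine ⟨fun i => mul_nonneg (by positivity) (hv i y), fun x => ?_⟩
  rw [← sq_mul_Bmat hm, hB, Finset.mul_sum]
  exact Finset.sum_congr rfl fun i _ => by ring

lemma two_le_card_of_Bmat_eq_sum {ι : Type*} [Fintype ι] (hm : 3 ≤ m) (hk0 : 0 < k) (hk1 : k < 1)
    {u v : ι → Fin m → ℝ} (hB : ∀ x y, Bmat m k x y = ∑ i, u i x * v i y) :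
    2 ≤ Fintype.card ι := by
  have hm' : (3 : ℝ) ≤ m := by exact_mod_cast hm
  have hq : cos (2 * π / m) < 1 := by
    rw [← cos_zero]
    refine cos_lt_cos_of_nonneg_of_le_pi le_rfl ?_ (by positivity)
    rw [div_le_iff₀ (by linarith)]
    nlinarith [pi_pos]
  refine two_le_card_of_mul_ne_mul hB (x := ⟨0, by omega⟩) (x' := ⟨1, by omega⟩)
    (y := ⟨0, by omega⟩) (y' := ⟨m - 1, by omega⟩) (ne_of_lt ?_)
  simp only [Bmat, Matrix.of_apply, Nat.cast_zero, Nat.cast_one, Nat.cast_sub (by omega : 1 ≤ m)]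
  rw [show 2 * π * ((0 : ℝ) + 0) / m = 0 by ring, show 2 * π * ((1 : ℝ) + (m - 1)) / m = 2 * π by
    field_simp; ring, show 2 * π * ((0 : ℝ) + (m - 1)) / m = 2 * π - 2 * π / m by field_simp; ring,
    show 2 * π * ((1 : ℝ) + 0) / m = 2 * π / m by ring, cos_zero, cos_two_pi, cos_two_pi_sub]
  have hlt : 1 / (m : ℝ) ^ 2 * (1 - k * 1) < 1 / (m : ℝ) ^ 2 * (1 - k * cos (2 * π / m)) := by
    gcongr
  exact mul_self_lt_mul_self (mul_nonneg (by positivity) (by linarith)) hlt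

end Bmat

/-- when k > cos(2π/m)/cos²(π/m), the nonnegative rank of B_m exceeds
log₂(m/2). -/
theorem Bmat_nonnegRank_gt_logb
    (m : ℕ) (hm : 3 ≤ m) (k : ℝ) (hk0 : 0 < k) (hk1 : k < 1)
    (hkl : Real.cos (2 * Real.pi / m) / (Real.cos (Real.pi / m)) ^ 2 < k) :
    Real.logb 2 ((m : ℝ) / 2) < (NonnegRank (Bmat m k) : ℝ) := by
  obtain ⟨u, v, hu, hv, hB⟩ :=
    exists_nonneg_factorization_nonnegRank (Bmat_nonneg (abs_le.2 ⟨by linarith, hk1.le⟩))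
  have hpow : (m : ℝ) / 2 < 2 ^ NonnegRank (Bmat m k) := by
    rcases lt_or_ge m 8 with hm8 | hm8
    · have h2 := two_le_card_of_Bmat_eq_sum hm hk0 hk1 hB
      rw [Fintype.card_fin] at h2
      calc (m : ℝ) / 2 < 2 ^ 2 := by
            have : (m : ℝ) ≤ 7 := by exact_mod_cast (by omega : m ≤ 7)
            linarith
        _ ≤ 2 ^ NonnegRank (Bmat m k) := pow_le_pow_right₀ one_le_two h2
    · simpa using half_lt_two_pow_card hm8 hk0.le hk1.le hkl hu
        fun y => ⟨_, Bmat_column_mem_trigReps (by omega) hv hB y⟩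
  rw [Real.logb_lt_iff_lt_rpow one_lt_two (by positivity), Real.rpow_natCast]
  exact hpow

end
end
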